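/- arXiv:math/0305108 — 3 statements merged into one kernel-verified Lean document; each statement's English description precedes it below -/
import Mathlib

section
/- Let ρ be a Banach function norm on (Γ,μ), t ∈ Γ, and let w be a weight with w ∈ X and 1/w ∈ X'. If w ∈ A_X(Γ,t) and 1 ∈ A_X(Γ,t), then log w ∈ BMO(Γ,t), with the quantitative bound ‖log w‖_{*,t} ≤ log( sup_{R>0} C(w,t,R) + sup_{R>0} C'(w,t,R) ). -/
open MeasureTheory Filter Set Topology
open scoped ENNReal NNReal

noncomputable section

namespace SIO

/-- The portion `Γ(t,R) := {τ ∈ Γ : |τ − t| < R}`. -/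
def portion (Γ : Set ℂ) (t : ℂ) (R : ℝ) : Set ℂ := Γ ∩ Metric.ball t R

/-- The annulus portion `Δ(t,R) := Γ(t,R) \ Γ(t,R/2)`. -/
def annulus (Γ : Set ℂ) (t : ℂ) (R : ℝ) : Set ℂ := portion Γ t R \ portion Γ t (R / 2)

/-- `d_t := max_{τ ∈ Γ} |τ − t|`. -/
def dMax (Γ : Set ℂ) (t : ℂ) : ℝ := sSup ((fun τ => dist τ t) '' Γ)

/-- A weight: measurable, positive and finite a.e. -/
def IsWeight (μ : Measure ℂ) (w : ℂ → ℝ≥0∞) : Prop :=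
  Measurable w ∧ ∀ᵐ x ∂μ, 0 < w x ∧ w x < ⊤

/-- A Banach function norm on `(Γ, μ)`: axioms (A1)–(A5). -/
structure IsBFN (μ : Measure ℂ) (ρ : (ℂ → ℝ≥0∞) → ℝ≥0∞) : Prop where
  eq_zero_iff : ∀ f : ℂ → ℝ≥0∞, Measurable f → (ρ f = 0 ↔ f =ᵐ[μ] 0)
  smul : ∀ (a : ℝ≥0) (f : ℂ → ℝ≥0∞), Measurable f →
    ρ (fun x => (a : ℝ≥0∞) * f x) = (a : ℝ≥0∞) * ρ f
  add_le : ∀ f g : ℂ → ℝ≥0∞, Measurable f → Measurable g →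
    ρ (fun x => f x + g x) ≤ ρ f + ρ g
  mono : ∀ f g : ℂ → ℝ≥0∞, Measurable f → Measurable g →
    (∀ᵐ x ∂μ, g x ≤ f x) → ρ g ≤ ρ f
  fatou : ∀ (fs : ℕ → ℂ → ℝ≥0∞) (f : ℂ → ℝ≥0∞), (∀ n, Measurable (fs n)) → Measurable f →
    (∀ᵐ x ∂μ, Monotone fun n => fs n x) →
    (∀ᵐ x ∂μ, Tendsto (fun n => fs n x) atTop (𝓝 (f x))) →
    Tendsto (fun n => ρ (fs n)) atTop (𝓝 (ρ f))
  indicator_lt_top : ∀ E : Set ℂ, MeasurableSet E → ρ (E.indicator 1) < ⊤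
  le_integral : ∀ E : Set ℂ, MeasurableSet E → ∃ C : ℝ≥0∞, 0 < C ∧ C < ⊤ ∧
    ∀ f : ℂ → ℝ≥0∞, Measurable f → ∫⁻ x in E, f x ∂μ ≤ C * ρ f

/-- The associate norm `ρ'`. -/
def assoc (μ : Measure ℂ) (ρ : (ℂ → ℝ≥0∞) → ℝ≥0∞) (g : ℂ → ℝ≥0∞) : ℝ≥0∞ :=
  ⨆ (f : ℂ → ℝ≥0∞) (_ : Measurable f) (_ : ρ f ≤ 1), ∫⁻ x, f x * g x ∂μ

/-- `B_{t,R}(w)` built from two norm functionals `N` (for `X`) and `N'` (for `X'`). -/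
def Bwt (N N' : (ℂ → ℝ≥0∞) → ℝ≥0∞) (Γ : Set ℂ) (w : ℂ → ℝ≥0∞) (t : ℂ) (R : ℝ) : ℝ≥0∞ :=
  (ENNReal.ofReal R)⁻¹ * N ((portion Γ t R).indicator w) *
    N' ((portion Γ t R).indicator fun x => (w x)⁻¹)

/-- `w ∈ A_X(Γ, t)`. -/
def MemAt (N N' : (ℂ → ℝ≥0∞) → ℝ≥0∞) (Γ : Set ℂ) (w : ℂ → ℝ≥0∞) (t : ℂ) : Prop :=
  (⨆ (R : ℝ) (_ : 0 < R), Bwt N N' Γ w t R) < ⊤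

/-- `w ∈ A_X(Γ)`. -/
def MemAGlob (N N' : (ℂ → ℝ≥0∞) → ℝ≥0∞) (Γ : Set ℂ) (w : ℂ → ℝ≥0∞) : Prop :=
  (⨆ t ∈ Γ, ⨆ (R : ℝ) (_ : 0 < R), Bwt N N' Γ w t R) < ⊤

/-- `Ω_t(f,R)`: mean of `f` over the portion `Γ(t,R)`. -/
def avg (μ : Measure ℂ) (Γ : Set ℂ) (f : ℂ → ℝ) (t : ℂ) (R : ℝ) : ℝ :=
  (∫ x in portion Γ t R, f x ∂μ) / (μ (portion Γ t R)).toReal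

/-- `log w` as a real-valued function. -/
def logw (w : ℂ → ℝ≥0∞) : ℂ → ℝ := fun x => Real.log (w x).toReal

/-- The BMO seminorm `‖f‖_{*,t}` at a point `t`. -/
def bmoAt (μ : Measure ℂ) (Γ : Set ℂ) (f : ℂ → ℝ) (t : ℂ) : ℝ≥0∞ :=
  ⨆ (R : ℝ) (_ : 0 < R),
    ENNReal.ofReal ((∫ x in portion Γ t R, |f x - avg μ Γ f t R| ∂μ) /
      (μ (portion Γ t R)).toReal)

/-- The quantity `C(w,t,R)`. -/
def Cq (μ : Measure ℂ) (N N' : (ℂ → ℝ≥0∞) → ℝ≥0∞) (Γ : Set ℂ) (w : ℂ → ℝ≥0∞)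
    (t : ℂ) (R : ℝ) : ℝ≥0∞ :=
  ENNReal.ofReal (Real.exp (-(avg μ Γ (logw w) t R))) *
    N ((portion Γ t R).indicator w) * N' ((portion Γ t R).indicator 1) /
      μ (portion Γ t R)

/-- The quantity `C'(w,t,R)`. -/
def Cq' (μ : Measure ℂ) (N N' : (ℂ → ℝ≥0∞) → ℝ≥0∞) (Γ : Set ℂ) (w : ℂ → ℝ≥0∞)
    (t : ℂ) (R : ℝ) : ℝ≥0∞ :=
  ENNReal.ofReal (Real.exp (avg μ Γ (logw w) t R)) *
    N ((portion Γ t R).indicator 1) * N' ((portion Γ t R).indicator fun x => (w x)⁻¹) /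
      μ (portion Γ t R)

/-- Submultiplicative function on `(0,∞)`. -/
def Submult (Φ : ℝ → ℝ≥0∞) : Prop := ∀ x y : ℝ, 0 < x → 0 < y → Φ (x * y) ≤ Φ x * Φ y

/-- Regular: bounded in an open neighborhood of `1`. -/
def RegularFn (Φ : ℝ → ℝ≥0∞) : Prop :=
  ∃ δ : ℝ, 0 < δ ∧ ∃ M : ℝ≥0∞, M < ⊤ ∧ ∀ x : ℝ, |x - 1| < δ → Φ x ≤ M

/-- Lower index `α(Φ)`. -/
def alphaInd (Φ : ℝ → ℝ≥0∞) : ℝ :=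
  sSup ((fun x => Real.log (Φ x).toReal / Real.log x) '' Ioo (0 : ℝ) 1)

/-- Upper index `β(Φ)`. -/
def betaInd (Φ : ℝ → ℝ≥0∞) : ℝ :=
  sInf ((fun x => Real.log (Φ x).toReal / Real.log x) '' Ioi (1 : ℝ))

/-- `H_w(R₁,R₂)`. -/
def Hq (μ : Measure ℂ) (Γ : Set ℂ) (w : ℂ → ℝ≥0∞) (t : ℂ) (R₁ R₂ : ℝ) : ℝ :=
  Real.exp (avg μ Γ (logw w) t R₁ - avg μ Γ (logw w) t R₂)

/-- The submultiplicative function `V_t w`. -/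
def Vt (μ : Measure ℂ) (Γ : Set ℂ) (w : ℂ → ℝ≥0∞) (t : ℂ) : ℝ → ℝ≥0∞ := fun x =>
  if x ≤ 1 then
    ⨆ (R : ℝ) (_ : R ∈ Ioc (0 : ℝ) (dMax Γ t)), ENNReal.ofReal (Hq μ Γ w t (x * R) R)
  else
    ⨆ (R : ℝ) (_ : R ∈ Ioc (0 : ℝ) (dMax Γ t)), ENNReal.ofReal (Hq μ Γ w t R (x⁻¹ * R))

/-- `F_ψ(R₁,R₂)` for a continuous positive `ψ` on `Γ \ {t}`. -/
def Fq (Γ : Set ℂ) (ψ : ℂ → ℝ) (t : ℂ) (R₁ R₂ : ℝ) : ℝ :=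
  sSup (ψ '' (Γ ∩ Metric.sphere t R₁)) / sInf (ψ '' (Γ ∩ Metric.sphere t R₂))

/-- The submultiplicative function `W_t ψ`. -/
def Wt (Γ : Set ℂ) (ψ : ℂ → ℝ) (t : ℂ) : ℝ → ℝ≥0∞ := fun x =>
  if x ≤ 1 then
    ⨆ (R : ℝ) (_ : R ∈ Ioc (0 : ℝ) (dMax Γ t)), ENNReal.ofReal (Fq Γ ψ t (x * R) R)
  else
    ⨆ (R : ℝ) (_ : R ∈ Ioc (0 : ℝ) (dMax Γ t)), ENNReal.ofReal (Fq Γ ψ t R (x⁻¹ * R))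

/-- `G_w(R₁,R₂)` built from two norm functionals. -/
def Gq (μ : Measure ℂ) (N N' : (ℂ → ℝ≥0∞) → ℝ≥0∞) (Γ : Set ℂ) (w : ℂ → ℝ≥0∞)
    (t : ℂ) (R₁ R₂ : ℝ) : ℝ≥0∞ :=
  N ((annulus Γ t R₁).indicator w) * N' ((annulus Γ t R₂).indicator fun x => (w x)⁻¹) /
    μ (annulus Γ t R₂)

/-- The submultiplicative function `Q_t w`. -/
def Qt (μ : Measure ℂ) (N N' : (ℂ → ℝ≥0∞) → ℝ≥0∞) (Γ : Set ℂ) (w : ℂ → ℝ≥0∞)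
    (t : ℂ) : ℝ → ℝ≥0∞ := fun x =>
  if x ≤ 1 then
    ⨆ (R : ℝ) (_ : R ∈ Ioc (0 : ℝ) (dMax Γ t)), Gq μ N N' Γ w t (x * R) R
  else
    ⨆ (R : ℝ) (_ : R ∈ Ioc (0 : ℝ) (dMax Γ t)), Gq μ N N' Γ w t R (x⁻¹ * R)

/-- The function `Q_t⁰ w`. -/
def Qt0 (μ : Measure ℂ) (N N' : (ℂ → ℝ≥0∞) → ℝ≥0∞) (Γ : Set ℂ) (w : ℂ → ℝ≥0∞)
    (t : ℂ) : ℝ → ℝ≥0∞ := fun x =>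
  Filter.limsup (fun R => Gq μ N N' Γ w t (x * R) R) (𝓝[>] (0 : ℝ))

/-- Γ is locally a Carleson curve at `t`. -/
def LocCarleson (μ : Measure ℂ) (Γ : Set ℂ) (t : ℂ) : Prop :=
  (⨆ (R : ℝ) (_ : 0 < R), μ (portion Γ t R) / ENNReal.ofReal R) < ⊤

/-- Γ is a Carleson curve. -/
def Carleson (μ : Measure ℂ) (Γ : Set ℂ) : Prop :=
  (⨆ t ∈ Γ, ⨆ (R : ℝ) (_ : 0 < R), μ (portion Γ t R) / ENNReal.ofReal R) < ⊤

/-- The Luxemburg–Nakano norm of the variable exponent Lebesgue space `L^{p(·)}`. -/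
def nakanoNorm (μ : Measure ℂ) (p : ℂ → ℝ) (f : ℂ → ℝ≥0∞) : ℝ≥0∞ :=
  sInf {lam : ℝ≥0∞ | 0 < lam ∧ ∫⁻ x, (f x / lam) ^ (p x) ∂μ ≤ 1}

/-- The conjugate exponent function. -/
def conjExp (p : ℂ → ℝ) : ℂ → ℝ := fun τ => p τ / (p τ - 1)

/-- The class `P_t` of variable exponents. -/
def ClassPt (Γ : Set ℂ) (p : ℂ → ℝ) (t : ℂ) : Prop :=
  ∃ A : ℝ, 0 < A ∧ ∀ τ ∈ Γ, dist τ t ≤ 1 / 2 →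
    |p τ - p t| ≤ A / (-Real.log (dist τ t))

/-- The class `P` of variable exponents. -/
def ClassP (Γ : Set ℂ) (p : ℂ → ℝ) : Prop :=
  ∃ A : ℝ, 0 < A ∧ ∀ τ ∈ Γ, ∀ t ∈ Γ, dist τ t ≤ 1 / 2 →
    |p τ - p t| ≤ A / (-Real.log (dist τ t))

/-- A continuous branch of the argument of `τ − t` on `Γ \ {t}`. -/
def IsArgBranch (Γ : Set ℂ) (t : ℂ) (θ : ℂ → ℝ) : Prop :=
  ContinuousOn θ (Γ \ {t}) ∧ ∀ τ ∈ Γ \ {t},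
    τ - t = (‖τ - t‖ : ℂ) * Complex.exp (Complex.I * θ τ)

/-- `η_t(τ) := e^{−arg(τ−t)}`. -/
def etaW (θ : ℂ → ℝ) : ℂ → ℝ := fun τ => Real.exp (-θ τ)

/-- `φ_{t,γ}(τ) := |τ−t|^{Re γ} (η_t(τ))^{Im γ}`. -/
def phiW (t : ℂ) (θ : ℂ → ℝ) (γ : ℂ) : ℂ → ℝ :=
  fun τ => (dist τ t) ^ γ.re * (etaW θ τ) ^ γ.im


end SIO

open SIO

namespace SIO

/-- Hölder when ρ f < ⊤. -/
theorem holder_of_lt_top {μ : Measure ℂ} {ρ : (ℂ → ℝ≥0∞) → ℝ≥0∞} (hρ : IsBFN μ ρ)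
    {f g : ℂ → ℝ≥0∞} (hf : Measurable f) (hg : Measurable g) (hft : ρ f ≠ ⊤) :
    ∫⁻ x, f x * g x ∂μ ≤ ρ f * assoc μ ρ g := by
  rcases eq_or_ne (ρ f) 0 with h0 | h0
  · have hz : f =ᵐ[μ] 0 := (hρ.eq_zero_iff f hf).1 h0
    have : (fun x => f x * g x) =ᵐ[μ] 0 := by
      filter_upwards [hz] with x hx
      simp [Pi.zero_apply] at hx ⊢
      simp [hx]
    rw [lintegral_congr_ae this]
    simp
  · set a : ℝ≥0 := (ρ f).toNNReal⁻¹ with ha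
    have hcoe : ((ρ f).toNNReal : ℝ≥0∞) = ρ f := ENNReal.coe_toNNReal hft
    have hane : (ρ f).toNNReal ≠ 0 := by
      simp [ENNReal.toNNReal_eq_zero_iff, h0, hft]
    have hsmul : ρ (fun x => (a : ℝ≥0∞) * f x) = 1 := by
      rw [hρ.smul a f hf, ha, ENNReal.coe_inv hane, hcoe,
        ENNReal.inv_mul_cancel h0 hft]
    have hle : ∫⁻ x, ((a : ℝ≥0∞) * f x) * g x ∂μ ≤ assoc μ ρ g := by
      refine le_trans ?_ (le_iSup₂ (f := fun (h : ℂ → ℝ≥0∞) (_ : Measurable h) =>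
        ⨆ (_ : ρ h ≤ 1), ∫⁻ x, h x * g x ∂μ) (fun x => (a : ℝ≥0∞) * f x)
        (hf.const_mul _))
      rw [iSup_pos hsmul.le]
    have heq : ∫⁻ x, ((a : ℝ≥0∞) * f x) * g x ∂μ = (a : ℝ≥0∞) * ∫⁻ x, f x * g x ∂μ := by
      rw [← lintegral_const_mul _ (show Measurable (fun x => f x * g x) from hf.mul hg)]
      simp [mul_assoc]
    rw [heq] at hle
    have hainv : ((a : ℝ≥0∞))⁻¹ = ρ f := by
      rw [ha, ENNReal.coe_inv hane, inv_inv, hcoe]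
    calc ∫⁻ x, f x * g x ∂μ = ((a:ℝ≥0∞))⁻¹ * ((a:ℝ≥0∞) * ∫⁻ x, f x * g x ∂μ) := by
          rw [← mul_assoc, ENNReal.inv_mul_cancel (by simp [ha, ENNReal.coe_inv hane, h0, hft])
            (by simp), one_mul]
      _ ≤ ((a:ℝ≥0∞))⁻¹ * assoc μ ρ g := by gcongr
      _ = ρ f * assoc μ ρ g := by rw [hainv]


theorem assoc_mono {μ : Measure ℂ} {ρ : (ℂ → ℝ≥0∞) → ℝ≥0∞} {g g' : ℂ → ℝ≥0∞}
    (h : ∀ x, g x ≤ g' x) : assoc μ ρ g ≤ assoc μ ρ g' := by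
  refine iSup_mono fun f => iSup_mono fun hf => iSup_mono fun hρf => ?_
  exact lintegral_mono fun x => mul_le_mul_right (h x) _

theorem assoc_indicator_lt_top {μ : Measure ℂ} {ρ : (ℂ → ℝ≥0∞) → ℝ≥0∞} (hρ : IsBFN μ ρ)
    {E : Set ℂ} (hE : MeasurableSet E) : assoc μ ρ (E.indicator 1) < ⊤ := by
  obtain ⟨C, hC0, hCt, hC⟩ := hρ.le_integral E hE
  have : assoc μ ρ (E.indicator 1) ≤ C := by
    refine iSup₂_le fun f hf => iSup_le fun hρf => ?_
    have heq : ∫⁻ x, f x * E.indicator 1 x ∂μ = ∫⁻ x in E, f x ∂μ := by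
      rw [← lintegral_indicator hE]
      refine lintegral_congr fun x => ?_
      by_cases hx : x ∈ E <;> simp [Set.indicator_of_mem, Set.indicator_of_notMem, hx]
    rw [heq]
    exact (hC f hf).trans (by simpa using mul_le_mul_right hρf C)
  exact lt_of_le_of_lt this hCt

theorem rho_one_lt_top {μ : Measure ℂ} {ρ : (ℂ → ℝ≥0∞) → ℝ≥0∞} (hρ : IsBFN μ ρ) :
    ρ (fun _ => (1 : ℝ≥0∞)) < ⊤ := by
  have := hρ.indicator_lt_top univ MeasurableSet.univ
  exact (by simpa [Set.indicator_univ] using this : ρ 1 < ⊤)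

/-- Full Hölder inequality. -/
theorem holder {μ : Measure ℂ} {ρ : (ℂ → ℝ≥0∞) → ℝ≥0∞} (hρ : IsBFN μ ρ)
    {f g : ℂ → ℝ≥0∞} (hf : Measurable f) (hg : Measurable g) :
    ∫⁻ x, f x * g x ∂μ ≤ ρ f * assoc μ ρ g := by
  rcases eq_or_ne (ρ f) ⊤ with hft | hft
  swap
  · exact holder_of_lt_top hρ hf hg hft
  rcases eq_or_ne (assoc μ ρ g) 0 with hg0 | hg0
  swap
  · rw [hft, ENNReal.top_mul hg0]; exact le_top
  -- assoc g = 0 : approximate f by min (f x) n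
  have hsupmin : ∀ a : ℝ≥0∞, ⨆ n : ℕ, min a (n : ℝ≥0∞) = a := by
    intro a
    refine le_antisymm (iSup_le fun n => min_le_left _ _) ?_
    rcases eq_or_ne a ⊤ with rfl | hane
    · calc (⊤:ℝ≥0∞) = ⨆ n : ℕ, (n:ℝ≥0∞) := ENNReal.iSup_natCast.symm
        _ ≤ ⨆ n : ℕ, min ⊤ (n:ℝ≥0∞) := by simp
    · obtain ⟨n, hn⟩ := ENNReal.exists_nat_gt hane
      calc a = min a n := (min_eq_left hn.le).symm
        _ ≤ ⨆ n : ℕ, min a (n:ℝ≥0∞) := le_iSup (fun n : ℕ => min a (n:ℝ≥0∞)) n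
  have hzero : ∀ n : ℕ, ∫⁻ x, min (f x) (n:ℝ≥0∞) * g x ∂μ = 0 := by
    intro n
    have hm : Measurable fun x => min (f x) (n:ℝ≥0∞) := hf.min measurable_const
    have hρn : ρ (fun x => min (f x) (n:ℝ≥0∞)) ≠ ⊤ := by
      have h1 : ρ (fun x => ((n:ℝ≥0) : ℝ≥0∞) * (1:ℝ≥0∞)) = (n:ℝ≥0∞) * ρ (fun _ => 1) := by
        simpa using hρ.smul (n:ℝ≥0) (fun _ => 1) measurable_const
      have h2 : ρ (fun x => min (f x) (n:ℝ≥0∞)) ≤ ρ (fun x => ((n:ℝ≥0) : ℝ≥0∞) * (1:ℝ≥0∞)) :=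
        hρ.mono _ _ (measurable_const) hm
          (Filter.Eventually.of_forall fun x => by simp [min_le_right])
      refine ne_top_of_le_ne_top ?_ (h2.trans_eq h1)
      exact ENNReal.mul_ne_top (by simp) (rho_one_lt_top hρ).ne
    have := holder_of_lt_top hρ hm hg hρn
    rw [hg0, mul_zero] at this
    exact le_antisymm this bot_le
  have hmct : ∫⁻ x, f x * g x ∂μ = ⨆ n : ℕ, ∫⁻ x, min (f x) (n:ℝ≥0∞) * g x ∂μ := by
    rw [← lintegral_iSup (f := fun (n : ℕ) x => min (f x) (n:ℝ≥0∞) * g x)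
      (fun n => show Measurable (fun x => min (f x) (n:ℝ≥0∞) * g x) from (hf.min measurable_const).mul hg)
      (fun i j hij => fun x => mul_le_mul_left (min_le_min le_rfl (by exact_mod_cast hij)) _)]
    refine lintegral_congr fun x => ?_
    rw [← ENNReal.iSup_mul, hsupmin]
  rw [hmct]
  simp [hzero]


theorem measure_portion_ge {Γ : Set ℂ} (hΓconn : IsConnected Γ) {t : ℂ} (ht : t ∈ Γ)
    {τ : ℂ} (hτ : τ ∈ Γ) {R : ℝ} (hR : R ≤ dist τ t) :
    ENNReal.ofReal R ≤ μH[1] (Γ ∩ Metric.ball t R) := by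
  rcases le_or_gt R 0 with hR0 | hR0
  · simp [ENNReal.ofReal_eq_zero.2 hR0]
  set φ : ℂ → ℝ := fun z => dist z t with hφdef
  have hφc : Continuous φ := Continuous.dist continuous_id continuous_const
  have hconn : IsPreconnected (φ '' Γ) := hΓconn.isPreconnected.image φ hφc.continuousOn
  have h0 : (0:ℝ) ∈ φ '' Γ := ⟨t, ht, by simp [hφdef]⟩
  have hd : dist τ t ∈ φ '' Γ := ⟨τ, hτ, rfl⟩
  have hIcc : Icc (0:ℝ) (dist τ t) ⊆ φ '' Γ := hconn.Icc_subset h0 hd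
  have hIco : Ico (0:ℝ) R ⊆ φ '' (Γ ∩ Metric.ball t R) := by
    rintro r ⟨hr0, hrR⟩
    obtain ⟨z, hz, hzr⟩ := hIcc ⟨hr0, hrR.le.trans hR⟩
    refine ⟨z, ⟨hz, ?_⟩, hzr⟩
    have : dist z t = r := hzr
    simp [Metric.mem_ball, this, hrR]
  calc ENNReal.ofReal R = volume (Ico (0:ℝ) R) := by simp [Real.volume_Ico]
    _ = μH[1] (Ico (0:ℝ) R) := by rw [MeasureTheory.hausdorffMeasure_real]
    _ ≤ μH[1] (φ '' (Γ ∩ Metric.ball t R)) := measure_mono hIco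
    _ ≤ μH[1] (Γ ∩ Metric.ball t R) := by
        simpa using (LipschitzWith.dist_left t).hausdorffMeasure_image_le
          zero_le_one (Γ ∩ Metric.ball t R)



theorem perR {Γ : Set ℂ} {μ : Measure ℂ} {t : ℂ}
    {ρ : (ℂ → ℝ≥0∞) → ℝ≥0∞} (hρ : IsBFN μ ρ)
    {w : ℂ → ℝ≥0∞} (hw : IsWeight μ w)
    (hwX : ρ w < ⊤) (hwX' : assoc μ ρ (fun x => (w x)⁻¹) < ⊤)
    (R : ℝ) (hE : MeasurableSet (portion Γ t R)) (hEne : μ (portion Γ t R) ≠ 0)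
    (hEfin : μ (portion Γ t R) ≠ ⊤) :
    (ENNReal.ofReal (Real.exp ((∫ x in portion Γ t R,
          |logw w x - avg μ Γ (logw w) t R| ∂μ) / (μ (portion Γ t R)).toReal)) ≤
      Cq μ ρ (assoc μ ρ) Γ w t R + Cq' μ ρ (assoc μ ρ) Γ w t R) ∧
    Cq μ ρ (assoc μ ρ) Γ w t R ≤
      ρ ((portion Γ t R).indicator 1) *
        assoc μ ρ ((portion Γ t R).indicator fun x => (w x)⁻¹) / μ (portion Γ t R) *
      (ρ ((portion Γ t R).indicator w) * assoc μ ρ ((portion Γ t R).indicator 1)) /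
        μ (portion Γ t R) ∧
    Cq' μ ρ (assoc μ ρ) Γ w t R ≤
      ρ ((portion Γ t R).indicator w) *
        assoc μ ρ ((portion Γ t R).indicator 1) / μ (portion Γ t R) *
      (ρ ((portion Γ t R).indicator 1) *
        assoc μ ρ ((portion Γ t R).indicator fun x => (w x)⁻¹)) / μ (portion Γ t R) := by
  set E := portion Γ t R with hEdef
  set ν := μ.restrict E with hν
  haveI : IsFiniteMeasure ν := ⟨by rw [hν, Measure.restrict_apply_univ]; exact hEfin.lt_top⟩
  haveI : NeZero ν := ⟨by rw [hν, Ne, Measure.restrict_eq_zero]; exact hEne⟩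
  have hwm : Measurable w := hw.1
  have hfm : Measurable (logw w) := Real.measurable_log.comp hwm.ennreal_toReal
  set f := logw w with hfdef
  have hfx : ∀ x, f x = Real.log (w x).toReal := fun _ => rfl
  have apos : ∀ᵐ x ∂ν, 0 < w x ∧ w x < ⊤ := ae_restrict_of_ae hw.2
  -- abbreviations for the norms
  set P := ρ (E.indicator w) with hP
  set U := ρ (E.indicator 1) with hU
  set V := assoc μ ρ (E.indicator 1) with hV
  set Q := assoc μ ρ (E.indicator fun x => (w x)⁻¹) with hQ
  -- Hölder bounds
  have HW : ∫⁻ x, w x ∂ν ≤ P * V := by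
    have h1 : ∀ x, E.indicator w x * E.indicator 1 x = E.indicator w x := by
      intro x; by_cases h : x ∈ E <;> simp [h]
    calc ∫⁻ x, w x ∂ν = ∫⁻ x, E.indicator w x ∂μ := (lintegral_indicator hE w).symm
      _ = ∫⁻ x, E.indicator w x * E.indicator 1 x ∂μ := by simp_rw [h1]
      _ ≤ P * V := holder hρ (hwm.indicator hE) (measurable_one.indicator hE)
  have HW' : ∫⁻ x, (w x)⁻¹ ∂ν ≤ U * Q := by
    have h1 : ∀ x, E.indicator 1 x * E.indicator (fun y => (w y)⁻¹) x
        = E.indicator (fun y => (w y)⁻¹) x := by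
      intro x; by_cases h : x ∈ E <;> simp [h]
    calc ∫⁻ x, (w x)⁻¹ ∂ν = ∫⁻ x, E.indicator (fun y => (w y)⁻¹) x ∂μ :=
          (lintegral_indicator hE _).symm
      _ = ∫⁻ x, E.indicator 1 x * E.indicator (fun y => (w y)⁻¹) x ∂μ := by simp_rw [h1]
      _ ≤ U * Q := holder hρ (measurable_one.indicator hE) (hwm.inv.indicator hE)
  have hPfin : P < ⊤ := lt_of_le_of_lt (hρ.mono w _ hwm (hwm.indicator hE)
    (Filter.Eventually.of_forall fun x => Set.indicator_le_self E w x)) hwX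
  have hUfin : U < ⊤ := hρ.indicator_lt_top E hE
  have hVfin : V < ⊤ := assoc_indicator_lt_top hρ hE
  have hQfin : Q < ⊤ := lt_of_le_of_lt
    (assoc_mono fun x => Set.indicator_le_self E _ x) hwX'
  have LWne : ∫⁻ x, w x ∂ν ≠ ⊤ := (lt_of_le_of_lt HW (ENNReal.mul_lt_top hPfin hVfin)).ne
  have LW'ne : ∫⁻ x, (w x)⁻¹ ∂ν ≠ ⊤ :=
    (lt_of_le_of_lt HW' (ENNReal.mul_lt_top hUfin hQfin)).ne
  have intW : Integrable (fun x => (w x).toReal) ν :=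
    integrable_toReal_of_lintegral_ne_top hwm.aemeasurable LWne
  have intW' : Integrable (fun x => ((w x)⁻¹).toReal) ν :=
    integrable_toReal_of_lintegral_ne_top hwm.inv.aemeasurable LW'ne
  have hfb : ∀ᵐ x ∂ν, ‖f x‖ ≤ (w x).toReal + ((w x)⁻¹).toReal := by
    filter_upwards [apos] with x hx
    have hy : 0 < (w x).toReal := ENNReal.toReal_pos hx.1.ne' hx.2.ne
    rw [ENNReal.toReal_inv, hfx, Real.norm_eq_abs]
    rcases le_total 0 (Real.log (w x).toReal) with h | h
    · rw [abs_of_nonneg h]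
      have := Real.log_le_sub_one_of_pos hy
      nlinarith [inv_nonneg.2 hy.le]
    · rw [abs_of_nonpos h]
      have h2 : Real.log ((w x).toReal)⁻¹ ≤ ((w x).toReal)⁻¹ - 1 :=
        Real.log_le_sub_one_of_pos (inv_pos.2 hy)
      rw [Real.log_inv] at h2
      nlinarith
  have intF : Integrable f ν := (intW.add intW').mono' hfm.aestronglyMeasurable hfb
  set κ := (μ E).toReal with hκ
  have κpos : 0 < κ := ENNReal.toReal_pos hEne hEfin
  have hνuniv : (ν univ).toReal = κ := by rw [hν, Measure.restrict_apply_univ]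
  have haveq : ∀ g : ℂ → ℝ, ⨍ x, g x ∂ν = κ⁻¹ * ∫ x, g x ∂ν := by
    intro g; rw [average_eq, measureReal_def, hνuniv, smul_eq_mul]
  have havg : ⨍ x, f x ∂ν = avg μ Γ (logw w) t R := by
    rw [haveq, avg, ← hEdef, ← hκ, div_eq_inv_mul]
  set m := avg μ Γ (logw w) t R with hm
  have hexp : (fun x => Real.exp (f x)) =ᵐ[ν] fun x => (w x).toReal := by
    filter_upwards [apos] with x hx
    rw [hfx, Real.exp_log (ENNReal.toReal_pos hx.1.ne' hx.2.ne)]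
  have hexp' : (fun x => Real.exp (-f x)) =ᵐ[ν] fun x => ((w x)⁻¹).toReal := by
    filter_upwards [apos] with x hx
    rw [hfx, Real.exp_neg, Real.exp_log (ENNReal.toReal_pos hx.1.ne' hx.2.ne),
      ENNReal.toReal_inv]
  -- Jensen applications
  have jensen : ∀ g : ℂ → ℝ, Integrable g ν → Integrable (fun x => Real.exp (g x)) ν →
      Real.exp (⨍ x, g x ∂ν) ≤ ⨍ x, Real.exp (g x) ∂ν := fun g hg hg2 =>
    convexOn_exp.map_average_le Real.continuous_exp.continuousOn isClosed_univ
      (Filter.Eventually.of_forall fun _ => trivial) hg hg2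
  have J2 : Real.exp (-m) ≤ ⨍ x, ((w x)⁻¹).toReal ∂ν := by
    have := jensen (fun x => -f x) intF.neg (intW'.congr hexp'.symm)
    rwa [average_neg, havg, average_congr hexp'] at this
  have J2' : Real.exp m ≤ ⨍ x, (w x).toReal ∂ν := by
    have := jensen f intF (intW.congr hexp.symm)
    rwa [havg, average_congr hexp] at this
  have intAbs : Integrable (fun x => |f x - m|) ν := (intF.sub (integrable_const m)).abs
  have bnd : ∀ᵐ x ∂ν, ‖Real.exp |f x - m|‖ ≤
      Real.exp (-m) * (w x).toReal + Real.exp m * ((w x)⁻¹).toReal := by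
    filter_upwards [hexp, hexp'] with x h1 h2
    rw [Real.norm_eq_abs, abs_of_nonneg (Real.exp_pos _).le]
    have hcase : Real.exp |f x - m| ≤ Real.exp (f x - m) + Real.exp (-(f x - m)) := by
      rcases abs_cases (f x - m) with ⟨h, _⟩ | ⟨h, _⟩ <;> rw [h]
      · exact le_add_of_nonneg_right (Real.exp_pos _).le
      · exact le_add_of_nonneg_left (Real.exp_pos _).le
    refine hcase.trans (le_of_eq ?_)
    rw [show f x - m = f x + (-m) by ring, Real.exp_add, neg_add, Real.exp_add, ← h1,
      neg_neg, ← h2]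
    ring
  have intExpAbs : Integrable (fun x => Real.exp |f x - m|) ν :=
    ((intW.const_mul (Real.exp (-m))).add (intW'.const_mul (Real.exp m))).mono'
      ((Real.measurable_exp.comp ((hfm.sub measurable_const).abs)).aestronglyMeasurable) bnd
  have J1 : Real.exp (⨍ x, |f x - m| ∂ν) ≤ ⨍ x, Real.exp |f x - m| ∂ν :=
    jensen _ intAbs intExpAbs
  -- average monotonicity and linearity
  have hchain : ⨍ x, Real.exp |f x - m| ∂ν ≤
      Real.exp (-m) * ⨍ x, (w x).toReal ∂ν + Real.exp m * ⨍ x, ((w x)⁻¹).toReal ∂ν := by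
    rw [haveq, haveq, haveq]
    have hint : ∫ x, Real.exp |f x - m| ∂ν ≤
        ∫ x, (Real.exp (-m) * (w x).toReal + Real.exp m * ((w x)⁻¹).toReal) ∂ν := by
      refine integral_mono_ae intExpAbs
        ((intW.const_mul (Real.exp (-m))).add (intW'.const_mul (Real.exp m))) ?_
      filter_upwards [bnd] with x hx
      exact (le_abs_self _).trans (by rwa [Real.norm_eq_abs] at hx)
    have hsplit : ∫ x, (Real.exp (-m) * (w x).toReal + Real.exp m * ((w x)⁻¹).toReal) ∂ν
        = Real.exp (-m) * ∫ x, (w x).toReal ∂ν + Real.exp m * ∫ x, ((w x)⁻¹).toReal ∂ν := by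
      rw [integral_add (intW.const_mul _) (intW'.const_mul _), integral_const_mul,
        integral_const_mul]
    calc κ⁻¹ * ∫ x, Real.exp |f x - m| ∂ν
        ≤ κ⁻¹ * (Real.exp (-m) * ∫ x, (w x).toReal ∂ν
            + Real.exp m * ∫ x, ((w x)⁻¹).toReal ∂ν) := by
          rw [← hsplit]
          exact mul_le_mul_of_nonneg_left hint (inv_nonneg.2 κpos.le)
      _ = Real.exp (-m) * (κ⁻¹ * ∫ x, (w x).toReal ∂ν)
            + Real.exp m * (κ⁻¹ * ∫ x, ((w x)⁻¹).toReal ∂ν) := by ring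
  -- bridging ofReal of averages to lintegrals
  have bridgeW : ENNReal.ofReal (⨍ x, (w x).toReal ∂ν) = (∫⁻ x, w x ∂ν) / μ E := by
    rw [haveq, integral_toReal hwm.aemeasurable (apos.mono fun x h => h.2),
      ENNReal.ofReal_mul (inv_nonneg.2 κpos.le), ENNReal.ofReal_inv_of_pos κpos, hκ,
      ENNReal.ofReal_toReal hEfin, ENNReal.ofReal_toReal LWne, div_eq_mul_inv, mul_comm]
  have bridgeW' : ENNReal.ofReal (⨍ x, ((w x)⁻¹).toReal ∂ν) = (∫⁻ x, (w x)⁻¹ ∂ν) / μ E := by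
    rw [haveq, integral_toReal (f := fun x => (w x)⁻¹) hwm.inv.aemeasurable
        (apos.mono fun x h => by simpa [ENNReal.inv_lt_top] using h.1),
      ENNReal.ofReal_mul (inv_nonneg.2 κpos.le), ENNReal.ofReal_inv_of_pos κpos, hκ,
      ENNReal.ofReal_toReal hEfin, ENNReal.ofReal_toReal LW'ne, div_eq_mul_inv, mul_comm]
  -- the three conclusions
  have hCq : Cq μ ρ (assoc μ ρ) Γ w t R
      = ENNReal.ofReal (Real.exp (-m)) * P * V / μ E := rfl
  have hCq' : Cq' μ ρ (assoc μ ρ) Γ w t R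
      = ENNReal.ofReal (Real.exp m) * U * Q / μ E := rfl
  have key_c : ENNReal.ofReal (Real.exp (-m) * ⨍ x, (w x).toReal ∂ν)
      ≤ Cq μ ρ (assoc μ ρ) Γ w t R := by
    rw [ENNReal.ofReal_mul (Real.exp_pos _).le, bridgeW, hCq]
    calc ENNReal.ofReal (Real.exp (-m)) * ((∫⁻ x, w x ∂ν) / μ E)
        ≤ ENNReal.ofReal (Real.exp (-m)) * ((P * V) / μ E) := by gcongr
      _ = ENNReal.ofReal (Real.exp (-m)) * P * V / μ E := by
          rw [div_eq_mul_inv, div_eq_mul_inv]; ring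
  have key_c' : ENNReal.ofReal (Real.exp m * ⨍ x, ((w x)⁻¹).toReal ∂ν)
      ≤ Cq' μ ρ (assoc μ ρ) Γ w t R := by
    rw [ENNReal.ofReal_mul (Real.exp_pos _).le, bridgeW', hCq']
    calc ENNReal.ofReal (Real.exp m) * ((∫⁻ x, (w x)⁻¹ ∂ν) / μ E)
        ≤ ENNReal.ofReal (Real.exp m) * ((U * Q) / μ E) := by gcongr
      _ = ENNReal.ofReal (Real.exp m) * U * Q / μ E := by
          rw [div_eq_mul_inv, div_eq_mul_inv]; ring
  refine ⟨?_, ?_, ?_⟩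
  · -- main estimate
    have hT : (∫ x, |f x - m| ∂ν) / κ = ⨍ x, |f x - m| ∂ν := by
      rw [haveq, div_eq_inv_mul]
    calc ENNReal.ofReal (Real.exp ((∫ x, |f x - m| ∂ν) / κ))
        = ENNReal.ofReal (Real.exp (⨍ x, |f x - m| ∂ν)) := by rw [hT]
      _ ≤ ENNReal.ofReal (Real.exp (-m) * ⨍ x, (w x).toReal ∂ν
          + Real.exp m * ⨍ x, ((w x)⁻¹).toReal ∂ν) :=
          ENNReal.ofReal_le_ofReal (J1.trans hchain)
      _ ≤ ENNReal.ofReal (Real.exp (-m) * ⨍ x, (w x).toReal ∂ν)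
          + ENNReal.ofReal (Real.exp m * ⨍ x, ((w x)⁻¹).toReal ∂ν) :=
          ENNReal.ofReal_add_le
      _ ≤ Cq μ ρ (assoc μ ρ) Γ w t R + Cq' μ ρ (assoc μ ρ) Γ w t R :=
          add_le_add key_c key_c'
  · -- finiteness bound for Cq
    have hJ : ENNReal.ofReal (Real.exp (-m)) ≤ U * Q / μ E := by
      calc ENNReal.ofReal (Real.exp (-m))
          ≤ ENNReal.ofReal (⨍ x, ((w x)⁻¹).toReal ∂ν) := ENNReal.ofReal_le_ofReal J2
        _ = (∫⁻ x, (w x)⁻¹ ∂ν) / μ E := bridgeW'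
        _ ≤ U * Q / μ E := by gcongr
    rw [hCq, ← mul_assoc (U * Q / μ E)]
    gcongr
  · -- finiteness bound for Cq'
    have hJ : ENNReal.ofReal (Real.exp m) ≤ P * V / μ E := by
      calc ENNReal.ofReal (Real.exp m)
          ≤ ENNReal.ofReal (⨍ x, (w x).toReal ∂ν) := ENNReal.ofReal_le_ofReal J2'
        _ = (∫⁻ x, w x ∂ν) / μ E := bridgeW
        _ ≤ P * V / μ E := by gcongr
    rw [hCq', ← mul_assoc (P * V / μ E)]
    gcongr


end SIO



namespace SIO

theorem sup_Cq_fin (Γ : Set ℂ) (hΓc : IsCompact Γ) (hΓconn : IsConnected Γ)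
    (μ : Measure ℂ) (hμ : μ = (μH[1] : Measure ℂ).restrict Γ)
    (hμ0 : 0 < μ Γ) (hμfin : μ Γ < ⊤) (t : ℂ) (ht : t ∈ Γ)
    (ρ : (ℂ → ℝ≥0∞) → ℝ≥0∞) (hρ : IsBFN μ ρ)
    (w : ℂ → ℝ≥0∞) (hw : IsWeight μ w)
    (hwX : ρ w < ⊤) (hwX' : assoc μ ρ (fun x => (w x)⁻¹) < ⊤)
    (hwA : MemAt ρ (assoc μ ρ) Γ w t)
    (h1A : MemAt ρ (assoc μ ρ) Γ (fun _ => 1) t) :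
    (⨆ (R : ℝ) (_ : 0 < R), Cq μ ρ (assoc μ ρ) Γ w t R) < ⊤ ∧
    (⨆ (R : ℝ) (_ : 0 < R), Cq' μ ρ (assoc μ ρ) Γ w t R) < ⊤ := by
  have hΓm : MeasurableSet Γ := hΓc.isClosed.measurableSet
  have hwm : Measurable w := hw.1
  have hSw : (⨆ (R : ℝ) (_ : 0 < R), Bwt ρ (assoc μ ρ) Γ w t R) < ⊤ := hwA
  have hS1 : (⨆ (R : ℝ) (_ : 0 < R), Bwt ρ (assoc μ ρ) Γ (fun _ => 1) t R) < ⊤ := h1A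
  set Sw := ⨆ (R : ℝ) (_ : 0 < R), Bwt ρ (assoc μ ρ) Γ w t R with hSwdef
  set S1 := ⨆ (R : ℝ) (_ : 0 < R), Bwt ρ (assoc μ ρ) Γ (fun _ => 1) t R with hS1def
  -- the constants over the whole curve
  have hPΓ : ρ (Γ.indicator w) < ⊤ := lt_of_le_of_lt (hρ.mono w _ hwm (hwm.indicator hΓm)
    (Filter.Eventually.of_forall fun x => Set.indicator_le_self Γ w x)) hwX
  have hUΓ : ρ (Γ.indicator 1) < ⊤ := hρ.indicator_lt_top Γ hΓm
  have hVΓ : assoc μ ρ (Γ.indicator 1) < ⊤ := assoc_indicator_lt_top hρ hΓm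
  have hQΓ : assoc μ ρ (Γ.indicator fun x => (w x)⁻¹) < ⊤ := lt_of_le_of_lt
    (assoc_mono fun x => Set.indicator_le_self Γ _ x) hwX'
  set D : ℝ≥0∞ := ρ (Γ.indicator 1) * assoc μ ρ (Γ.indicator fun x => (w x)⁻¹) / μ Γ *
      (ρ (Γ.indicator w) * assoc μ ρ (Γ.indicator 1)) / μ Γ with hDdef
  set D' : ℝ≥0∞ := ρ (Γ.indicator w) * assoc μ ρ (Γ.indicator 1) / μ Γ *
      (ρ (Γ.indicator 1) * assoc μ ρ (Γ.indicator fun x => (w x)⁻¹)) / μ Γ with hD'def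
  have hD : D < ⊤ := by
    rw [hDdef]
    refine ENNReal.div_lt_top (ENNReal.mul_lt_top ?_ (ENNReal.mul_lt_top hPΓ hVΓ)).ne hμ0.ne'
    exact ENNReal.div_lt_top (ENNReal.mul_lt_top hUΓ hQΓ).ne hμ0.ne'
  have hD' : D' < ⊤ := by
    rw [hD'def]
    refine ENNReal.div_lt_top (ENNReal.mul_lt_top ?_ (ENNReal.mul_lt_top hUΓ hQΓ)).ne hμ0.ne'
    exact ENNReal.div_lt_top (ENNReal.mul_lt_top hPΓ hVΓ).ne hμ0.ne'
  have hSwS1 : Sw * S1 < ⊤ := ENNReal.mul_lt_top hSw hS1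
  -- pointwise bounds
  have key : ∀ R : ℝ, 0 < R → Cq μ ρ (assoc μ ρ) Γ w t R ≤ Sw * S1 + D ∧
      Cq' μ ρ (assoc μ ρ) Γ w t R ≤ Sw * S1 + D' := by
    intro R hR
    set E := portion Γ t R with hEdef
    have hE : MeasurableSet E := hΓm.inter measurableSet_ball
    have hEsub : E ⊆ Γ := Set.inter_subset_left
    have hEfin : μ E ≠ ⊤ := ((measure_mono hEsub).trans_lt hμfin).ne
    rcases eq_or_ne (μ E) 0 with hzero | hEne
    · -- portion has measure zero: both quantities vanish
      have hout : ∀ᵐ x ∂μ, x ∉ E := by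
        rw [ae_iff]
        simpa [not_not] using hzero
      have hzw : ρ (E.indicator w) = 0 := by
        rw [hρ.eq_zero_iff _ (hwm.indicator hE)]
        filter_upwards [hout] with x hx
        simp [Set.indicator_of_notMem hx]
      have hz1 : ρ (E.indicator 1) = 0 := by
        rw [hρ.eq_zero_iff _ (measurable_one.indicator hE)]
        filter_upwards [hout] with x hx
        simp [Set.indicator_of_notMem hx]
      constructor
      · rw [Cq, ← hEdef, hzw]
        simp
      · rw [Cq', ← hEdef, hz1]
        simp
    · have hperR := perR hρ hw hwX hwX' R hE hEne hEfin
      rw [← hEdef] at hperR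
      by_cases hfar : ∃ τ ∈ Γ, R ≤ dist τ t
      · -- far case: compare with the A_X characteristics
        obtain ⟨τ, hτ, hRd⟩ := hfar
        have hrle : ENNReal.ofReal R ≤ μ E := by
          rw [hEdef, portion, hμ, Measure.restrict_apply (hΓm.inter measurableSet_ball),
            Set.inter_eq_left.2 (Set.inter_subset_left)]
          exact measure_portion_ge hΓconn ht hτ hRd
        set r := ENNReal.ofReal R with hrdef
        have hBw : Bwt ρ (assoc μ ρ) Γ w t R
            = r⁻¹ * ρ (E.indicator w) * assoc μ ρ (E.indicator fun x => (w x)⁻¹) := rfl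
        have hB1 : Bwt ρ (assoc μ ρ) Γ (fun _ => 1) t R
            = r⁻¹ * ρ (E.indicator 1) * assoc μ ρ (E.indicator 1) := by
          rw [Bwt]
          congr 1
          refine congrArg _ (congrArg _ ?_)
          funext x
          simp
        have hprod : ∀ X Y Z W : ℝ≥0∞,
            X * Y / μ E * (Z * W) / μ E ≤ X * Y / r * (Z * W) / r := by
          intro X Y Z W
          gcongr
        have hBle : Bwt ρ (assoc μ ρ) Γ w t R ≤ Sw :=
          le_iSup₂ (f := fun (R : ℝ) (_ : 0 < R) => Bwt ρ (assoc μ ρ) Γ w t R) R hR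
        have hB1le : Bwt ρ (assoc μ ρ) Γ (fun _ => 1) t R ≤ S1 :=
          le_iSup₂ (f := fun (R : ℝ) (_ : 0 < R) => Bwt ρ (assoc μ ρ) Γ (fun _ => 1) t R) R hR
        constructor
        · refine le_trans (hperR.2.1.trans ((hprod _ _ _ _).trans (le_of_eq ?_)))
            (le_add_right (mul_le_mul' hBle hB1le))
          rw [hBw, hB1, div_eq_mul_inv, div_eq_mul_inv]
          ring
        · refine le_trans (hperR.2.2.trans ((hprod _ _ _ _).trans (le_of_eq ?_)))
            (le_add_right (mul_le_mul' hBle hB1le))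
          rw [hBw, hB1, div_eq_mul_inv, div_eq_mul_inv]
          ring
      · -- near case: the portion is all of Γ
        push_neg at hfar
        have hEΓ : E = Γ := by
          rw [hEdef, portion, Set.inter_eq_left]
          intro τ hτ
          exact Metric.mem_ball.2 (hfar τ hτ)
        constructor
        · refine hperR.2.1.trans (le_add_left (le_of_eq ?_))
          rw [hEΓ, hDdef]
        · refine hperR.2.2.trans (le_add_left (le_of_eq ?_))
          rw [hEΓ, hD'def]
  constructor
  · exact lt_of_le_of_lt (iSup₂_le fun R hR => (key R hR).1)
      (ENNReal.add_lt_top.2 ⟨hSwS1, hD⟩)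
  · exact lt_of_le_of_lt (iSup₂_le fun R hR => (key R hR).2)
      (ENNReal.add_lt_top.2 ⟨hSwS1, hD'⟩)

end SIO

/-- If `w ∈ A_X(Γ,t)` and `1 ∈ A_X(Γ,t)`, then `log w ∈ BMO(Γ,t)`, with
`‖log w‖_{*,t} ≤ log( sup_{R>0} C(w,t,R) + sup_{R>0} C'(w,t,R) )`. -/
theorem stmt5 (Γ : Set ℂ) (hΓc : IsCompact Γ) (hΓconn : IsConnected Γ)
    (μ : Measure ℂ) (hμ : μ = (μH[1] : Measure ℂ).restrict Γ)
    (hμ0 : 0 < μ Γ) (hμfin : μ Γ < ⊤) (t : ℂ) (ht : t ∈ Γ)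
    (ρ : (ℂ → ℝ≥0∞) → ℝ≥0∞) (hρ : IsBFN μ ρ)
    (w : ℂ → ℝ≥0∞) (hw : IsWeight μ w)
    (hwX : ρ w < ⊤) (hwX' : assoc μ ρ (fun x => (w x)⁻¹) < ⊤)
    (hwA : MemAt ρ (assoc μ ρ) Γ w t)
    (h1A : MemAt ρ (assoc μ ρ) Γ (fun _ => 1) t) :
    bmoAt μ Γ (logw w) t < ⊤ ∧
    bmoAt μ Γ (logw w) t ≤ ENNReal.ofReal (Real.log
      ((⨆ (R : ℝ) (_ : 0 < R), Cq μ ρ (assoc μ ρ) Γ w t R).toReal +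
       (⨆ (R : ℝ) (_ : 0 < R), Cq' μ ρ (assoc μ ρ) Γ w t R).toReal)) := by
  obtain ⟨hS, hS'⟩ := sup_Cq_fin Γ hΓc hΓconn μ hμ hμ0 hμfin t ht ρ hρ w hw hwX hwX' hwA h1A
  set S := ⨆ (R : ℝ) (_ : 0 < R), Cq μ ρ (assoc μ ρ) Γ w t R with hSdef
  set S' := ⨆ (R : ℝ) (_ : 0 < R), Cq' μ ρ (assoc μ ρ) Γ w t R with hS'def
  set K := S.toReal + S'.toReal with hK
  have hΓm : MeasurableSet Γ := hΓc.isClosed.measurableSet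
  have hbound : bmoAt μ Γ (logw w) t ≤ ENNReal.ofReal (Real.log K) := by
    rw [bmoAt]
    refine iSup₂_le fun R hR => ?_
    have hE : MeasurableSet (portion Γ t R) := hΓm.inter measurableSet_ball
    have hEfin : μ (portion Γ t R) ≠ ⊤ :=
      ((measure_mono (Set.inter_subset_left)).trans_lt hμfin).ne
    rcases eq_or_ne (μ (portion Γ t R)) 0 with hzero | hEne
    · have : μ.restrict (portion Γ t R) = 0 := Measure.restrict_eq_zero.2 hzero
      rw [this]
      simp
    · have hmain := (perR hρ hw hwX hwX' R hE hEne hEfin).1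
      have hCle : Cq μ ρ (assoc μ ρ) Γ w t R + Cq' μ ρ (assoc μ ρ) Γ w t R ≤ S + S' :=
        add_le_add (le_iSup₂ (f := fun (R : ℝ) (_ : 0 < R) =>
            Cq μ ρ (assoc μ ρ) Γ w t R) R hR)
          (le_iSup₂ (f := fun (R : ℝ) (_ : 0 < R) => Cq' μ ρ (assoc μ ρ) Γ w t R) R hR)
      set T := (∫ x in portion Γ t R,
        |logw w x - avg μ Γ (logw w) t R| ∂μ) / (μ (portion Γ t R)).toReal with hT
      have hexpT : Real.exp T ≤ K := by
        have h1 : ENNReal.ofReal (Real.exp T) ≤ S + S' := hmain.trans hCle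
        have h2 : (ENNReal.ofReal (Real.exp T)).toReal ≤ (S + S').toReal :=
          ENNReal.toReal_mono (by simp [hS.ne, hS'.ne]) h1
        rwa [ENNReal.toReal_ofReal (Real.exp_pos _).le,
          ENNReal.toReal_add hS.ne hS'.ne] at h2
      have hKpos : 0 < K := lt_of_lt_of_le (Real.exp_pos T) hexpT
      exact ENNReal.ofReal_le_ofReal ((Real.le_log_iff_exp_le hKpos).2 hexpT)
  exact ⟨lt_of_le_of_lt hbound ENNReal.ofReal_lt_top, hbound⟩
end
end

section
/- Let ρ be a Banach function norm on (Γ,μ) and let w be a weight with w ∈ X and 1/w ∈ X'. If w ∈ A_X(Γ) and 1 ∈ A_X(Γ), then log w ∈ BMO(Γ), i.e. sup_{t∈Γ} ‖log w‖_{*,t} < ∞. -/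
open MeasureTheory Filter Set Topology
open scoped ENNReal NNReal

noncomputable section

open SIO

/-- Hölder's inequality for a Banach function norm and its associate norm. -/
lemma aux_holder {μ : Measure ℂ} {ρ : (ℂ → ℝ≥0∞) → ℝ≥0∞} (hρ : IsBFN μ ρ)
    {f g : ℂ → ℝ≥0∞} (hf : Measurable f) (hg : Measurable g) (hfρ : ρ f < ⊤) :
    ∫⁻ x, f x * g x ∂μ ≤ ρ f * assoc μ ρ g := by
  by_cases h0 : ρ f = 0
  · have hf0 : f =ᵐ[μ] 0 := (hρ.eq_zero_iff f hf).1 h0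
    have hzz : (fun x => f x * g x) =ᵐ[μ] 0 := by
      filter_upwards [hf0] with x hx
      simp only [Pi.zero_apply] at hx ⊢
      simp [hx]
    rw [lintegral_congr_ae hzz]
    simp
  · set b : ℝ≥0 := (ρ f).toNNReal with hbdef
    have hba : (b : ℝ≥0∞) = ρ f := ENNReal.coe_toNNReal hfρ.ne
    have hbne : b ≠ 0 := by
      intro h
      exact h0 (by rw [← hba, h, ENNReal.coe_zero])
    have hb0 : (b : ℝ≥0∞) ≠ 0 := ENNReal.coe_ne_zero.mpr hbne
    have hF : Measurable fun x => ((b⁻¹ : ℝ≥0) : ℝ≥0∞) * f x := measurable_const.mul hf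
    have hρF : ρ (fun x => ((b⁻¹ : ℝ≥0) : ℝ≥0∞) * f x) ≤ 1 := by
      rw [hρ.smul b⁻¹ f hf, ENNReal.coe_inv hbne, hba,
        ENNReal.inv_mul_cancel (hba ▸ hb0) hfρ.ne]
    have hle : ∫⁻ x, (((b⁻¹ : ℝ≥0) : ℝ≥0∞) * f x) * g x ∂μ ≤ assoc μ ρ g := by
      set F : ℂ → ℝ≥0∞ := fun x => ((b⁻¹ : ℝ≥0) : ℝ≥0∞) * f x with hFdef
      have s1 : ∫⁻ x, F x * g x ∂μ ≤ ⨆ (_ : ρ F ≤ 1), ∫⁻ x, F x * g x ∂μ :=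
        le_iSup (fun _ : ρ F ≤ 1 => ∫⁻ x, F x * g x ∂μ) hρF
      have s2 : (⨆ (_ : ρ F ≤ 1), ∫⁻ x, F x * g x ∂μ)
          ≤ ⨆ (_ : Measurable F) (_ : ρ F ≤ 1), ∫⁻ x, F x * g x ∂μ :=
        le_iSup (fun _ : Measurable F => ⨆ (_ : ρ F ≤ 1), ∫⁻ x, F x * g x ∂μ) hF
      have s3 : (⨆ (_ : Measurable F) (_ : ρ F ≤ 1), ∫⁻ x, F x * g x ∂μ)
          ≤ ⨆ h, ⨆ (_ : Measurable h) (_ : ρ h ≤ 1), ∫⁻ x, h x * g x ∂μ :=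
        le_iSup (fun h => ⨆ (_ : Measurable h) (_ : ρ h ≤ 1), ∫⁻ x, h x * g x ∂μ) F
      exact le_trans (le_trans s1 s2) s3
    simp_rw [mul_assoc] at hle
    rw [lintegral_const_mul (f := fun x => f x * g x) _ (hf.mul hg)] at hle
    have hI : ∫⁻ x, f x * g x ∂μ
        = (b : ℝ≥0∞) * (((b⁻¹ : ℝ≥0) : ℝ≥0∞) * ∫⁻ x, f x * g x ∂μ) := by
      rw [ENNReal.coe_inv hbne, ← mul_assoc, ENNReal.mul_inv_cancel hb0 ENNReal.coe_ne_top,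
        one_mul]
    rw [hI, ← hba]
    exact mul_le_mul_right hle _

/-- `|log a| ≤ a + a⁻¹` for `a > 0`. -/
lemma aux_abs_log {a : ℝ} (ha : 0 < a) : |Real.log a| ≤ a + a⁻¹ := by
  have hainv : 0 < a⁻¹ := inv_pos.mpr ha
  rcases le_total 1 a with h | h
  · rw [abs_of_nonneg (Real.log_nonneg h)]
    have := Real.log_le_sub_one_of_pos ha
    linarith
  · rw [abs_of_nonpos (Real.log_nonpos ha.le h), ← Real.log_inv]
    have := Real.log_le_sub_one_of_pos hainv
    linarith

lemma aux_abs_eq_max {a : ℝ} : |a| = max a 0 + max (-a) 0 := by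
  rcases le_total 0 a with h | h
  · rw [abs_of_nonneg h, max_eq_left h, max_eq_right (neg_nonpos.mpr h)]; ring
  · rw [abs_of_nonpos h, max_eq_right h, max_eq_left (neg_nonneg.mpr h)]; ring

lemma aux_eq_max_sub {a : ℝ} : a = max a 0 - max (-a) 0 := by
  rcases le_total 0 a with h | h
  · rw [max_eq_left h, max_eq_right (neg_nonpos.mpr h)]; ring
  · rw [max_eq_right h, max_eq_left (neg_nonneg.mpr h)]; ring

/-- Lower bound for the measure of a portion of a connected compact set. -/
lemma aux_measure_lb {Γ : Set ℂ} (hΓc : IsCompact Γ) (hΓconn : IsConnected Γ)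
    {μ : Measure ℂ} (hμ : μ = (μH[1] : Measure ℂ).restrict Γ)
    {t : ℂ} (ht : t ∈ Γ) {r : ℝ} (hr : 0 < r) :
    ENNReal.ofReal (min r (dMax Γ t)) ≤ μ (portion Γ t r) := by
  have hΓmeas : MeasurableSet Γ := hΓc.isClosed.measurableSet
  have hQmeas : MeasurableSet (portion Γ t r) := hΓmeas.inter measurableSet_ball
  set s := min r (dMax Γ t) with hs
  have himg : Ico (0 : ℝ) s ⊆ (fun τ => dist τ t) '' (portion Γ t r) := by
    rintro y ⟨hy0, hys⟩
    have hyd : y < dMax Γ t := lt_of_lt_of_le hys (min_le_right _ _)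
    have hne : ((fun τ => dist τ t) '' Γ).Nonempty := ⟨_, mem_image_of_mem _ ht⟩
    obtain ⟨z, hz, hyz⟩ := exists_lt_of_lt_csSup hne hyd
    have hconn : IsPreconnected ((fun τ => dist τ t) '' Γ) :=
      (hΓconn.image _ (Continuous.continuousOn (by fun_prop))).isPreconnected
    have hord := hconn.ordConnected
    have h0mem : (0 : ℝ) ∈ (fun τ => dist τ t) '' Γ := ⟨t, ht, dist_self t⟩
    obtain ⟨τ, hτΓ, hτy⟩ := hord.out h0mem hz ⟨hy0, hyz.le⟩
    have hτy' : dist τ t = y := hτy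
    exact ⟨τ, ⟨hτΓ, by
      rw [Metric.mem_ball, hτy']
      exact lt_of_lt_of_le hys (min_le_left _ _)⟩, hτy⟩
  have hsub : portion Γ t r ⊆ Γ := Set.inter_subset_left
  calc ENNReal.ofReal s = volume (Ico (0 : ℝ) s) := by rw [Real.volume_Ico, sub_zero]
    _ = μH[1] (Ico (0 : ℝ) s) := by rw [MeasureTheory.hausdorffMeasure_real]
    _ ≤ μH[1] ((fun τ => dist τ t) '' (portion Γ t r)) := measure_mono himg
    _ ≤ (1 : ℝ≥0) ^ (1 : ℝ) * μH[1] (portion Γ t r) :=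
        (LipschitzWith.dist_left t).hausdorffMeasure_image_le zero_le_one _
    _ = μH[1] (portion Γ t r) := by simp
    _ = μ (portion Γ t r) := by
        rw [hμ, Measure.restrict_apply hQmeas, Set.inter_eq_self_of_subset_left hsub]

/-- Jensen's inequality for `exp`. -/
lemma aux_jensen {ν : Measure ℂ} [IsFiniteMeasure ν] [NeZero ν] {h : ℂ → ℝ}
    (hint : Integrable h ν) (hexp : Integrable (fun x => Real.exp (h x)) ν) :
    Real.exp (⨍ x, h x ∂ν) ≤ ⨍ x, Real.exp (h x) ∂ν :=
  convexOn_exp.map_average_le Real.continuous_exp.continuousOn isClosed_univ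
    (Filter.Eventually.of_forall fun x => Set.mem_univ _) hint hexp

/-- If `w ∈ A_X(Γ)` and `1 ∈ A_X(Γ)`, then `log w ∈ BMO(Γ)`,
i.e. `sup_{t∈Γ} ‖log w‖_{*,t} < ∞`. -/
theorem stmt6 (Γ : Set ℂ) (hΓc : IsCompact Γ) (hΓconn : IsConnected Γ)
    (μ : Measure ℂ) (hμ : μ = (μH[1] : Measure ℂ).restrict Γ)
    (hμ0 : 0 < μ Γ) (hμfin : μ Γ < ⊤)
    (ρ : (ℂ → ℝ≥0∞) → ℝ≥0∞) (hρ : IsBFN μ ρ)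
    (w : ℂ → ℝ≥0∞) (hw : IsWeight μ w)
    (hwX : ρ w < ⊤) (hwX' : assoc μ ρ (fun x => (w x)⁻¹) < ⊤)
    (hwA : MemAGlob ρ (assoc μ ρ) Γ w)
    (h1A : MemAGlob ρ (assoc μ ρ) Γ (fun _ => 1)) :
    (⨆ t ∈ Γ, bmoAt μ Γ (logw w) t) < ⊤ := by
  obtain ⟨hwmeas, hwae⟩ := hw
  have hΓmeas : MeasurableSet Γ := hΓc.isClosed.measurableSet
  set Sw : ℝ≥0∞ := ⨆ t ∈ Γ, ⨆ (R : ℝ) (_ : 0 < R), Bwt ρ (assoc μ ρ) Γ w t R with hSwdef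
  set S1 : ℝ≥0∞ := ⨆ t ∈ Γ, ⨆ (R : ℝ) (_ : 0 < R),
    Bwt ρ (assoc μ ρ) Γ (fun _ => 1) t R with hS1def
  have hSw : Sw < ⊤ := hwA
  have hS1 : S1 < ⊤ := h1A
  set Kb : ℝ≥0∞ := 4 * Sw * S1 with hKbdef
  have hKbtop : Kb ≠ ⊤ := by
    rw [hKbdef]
    exact ENNReal.mul_ne_top (ENNReal.mul_ne_top (by norm_num) hSw.ne) hS1.ne
  set Kr : ℝ := max Kb.toReal 1 with hKrdef
  have hKr1 : (1 : ℝ) ≤ Kr := le_max_right _ _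
  have hC : ∀ t ∈ Γ, bmoAt μ Γ (logw w) t ≤ ENNReal.ofReal (2 * Real.log (Kr + 1)) := by
    intro t ht
    refine iSup₂_le fun R hR => ?_
    set Q := portion Γ t R with hQdef
    have hQmeas : MeasurableSet Q := hΓmeas.inter measurableSet_ball
    have hQsub : Q ⊆ Γ := Set.inter_subset_left
    have hQfin : μ Q < ⊤ := lt_of_le_of_lt (measure_mono hQsub) hμfin
    -- facts about dMax
    have hbdd : BddAbove ((fun τ => dist τ t) '' Γ) :=
      (hΓc.image (by fun_prop)).bddAbove
    have hdle : ∀ τ ∈ Γ, dist τ t ≤ dMax Γ t := fun τ hτ =>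
      le_csSup hbdd (mem_image_of_mem _ hτ)
    have hd0 : 0 < dMax Γ t := by
      rcases lt_or_ge 0 (dMax Γ t) with h | h
      · exact h
      · exfalso
        have hsub : Γ ⊆ {t} := fun τ hτ => by
          have h1 : dist τ t ≤ 0 := (hdle τ hτ).trans h
          have h2 : τ = t := by rwa [dist_le_zero] at h1
          simp [h2]
        have hμle : μ Γ ≤ μH[1] ({t} : Set ℂ) := by
          rw [hμ, Measure.restrict_apply hΓmeas]
          exact measure_mono ((Set.inter_subset_left).trans hsub)
        haveI := MeasureTheory.Measure.noAtoms_hausdorff ℂ one_pos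
        rw [measure_singleton] at hμle
        exact absurd (lt_of_lt_of_le hμ0 hμle) (lt_irrefl 0)
    -- measure lower bound
    have hmlow : ENNReal.ofReal (min R (dMax Γ t)) ≤ μ Q := aux_measure_lb hΓc hΓconn hμ ht hR
    have hm0 : 0 < μ Q := lt_of_lt_of_le (ENNReal.ofReal_pos.mpr (lt_min hR hd0)) hmlow
    set mR : ℝ := (μ Q).toReal with hmRdef
    have hmR : 0 < mR := ENNReal.toReal_pos hm0.ne' hQfin.ne
    -- a good radius r
    obtain ⟨r, hr0, hrQ, hrm⟩ : ∃ r : ℝ, 0 < r ∧ portion Γ t r = Q ∧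
        ENNReal.ofReal r ≤ 2 * μ Q := by
      rcases le_or_gt R (dMax Γ t) with h | h
      · refine ⟨R, hR, hQdef.symm, ?_⟩
        calc ENNReal.ofReal R = ENNReal.ofReal (min R (dMax Γ t)) := by rw [min_eq_left h]
          _ ≤ μ Q := hmlow
          _ ≤ 2 * μ Q := le_mul_of_one_le_left (by positivity) one_le_two
      · have hball : ∀ r' : ℝ, dMax Γ t < r' → portion Γ t r' = Γ := by
          intro r' hr'
          refine Set.inter_eq_left.mpr fun τ hτ => ?_
          exact Metric.mem_ball.mpr (lt_of_le_of_lt (hdle τ hτ) hr')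
        have hQΓ : Q = Γ := by rw [hQdef]; exact hball R h
        refine ⟨2 * dMax Γ t, by linarith, ?_, ?_⟩
        · rw [hball _ (by linarith), hQΓ]
        · have h2 := aux_measure_lb hΓc hΓconn hμ ht
            (show (0 : ℝ) < 2 * dMax Γ t by linarith)
          rw [hball _ (by linarith), min_eq_right (by linarith)] at h2
          rw [hQΓ]
          calc ENNReal.ofReal (2 * dMax Γ t) = 2 * ENNReal.ofReal (dMax Γ t) := by
                rw [ENNReal.ofReal_mul (by norm_num)]; norm_num
            _ ≤ 2 * μ Γ := mul_le_mul_right h2 2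
    -- A_X bounds at radius r
    have hrne : ENNReal.ofReal r ≠ 0 := (ENNReal.ofReal_pos.mpr hr0).ne'
    have hBgen : ∀ v : ℂ → ℝ≥0∞, Bwt ρ (assoc μ ρ) Γ v t r ≤
        ⨆ t ∈ Γ, ⨆ (R : ℝ) (_ : 0 < R), Bwt ρ (assoc μ ρ) Γ v t R := by
      intro v
      have s1 : Bwt ρ (assoc μ ρ) Γ v t r ≤ ⨆ (_ : 0 < r), Bwt ρ (assoc μ ρ) Γ v t r :=
        le_iSup (fun _ : 0 < r => Bwt ρ (assoc μ ρ) Γ v t r) hr0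
      have s2 : (⨆ (_ : 0 < r), Bwt ρ (assoc μ ρ) Γ v t r)
          ≤ ⨆ (R : ℝ) (_ : 0 < R), Bwt ρ (assoc μ ρ) Γ v t R :=
        le_iSup (fun R => ⨆ (_ : 0 < R), Bwt ρ (assoc μ ρ) Γ v t R) r
      have s3 : (⨆ (R : ℝ) (_ : 0 < R), Bwt ρ (assoc μ ρ) Γ v t R)
          ≤ ⨆ (_ : t ∈ Γ), ⨆ (R : ℝ) (_ : 0 < R), Bwt ρ (assoc μ ρ) Γ v t R :=
        le_iSup (fun _ : t ∈ Γ => ⨆ (R : ℝ) (_ : 0 < R), Bwt ρ (assoc μ ρ) Γ v t R) ht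
      have s4 : (⨆ (_ : t ∈ Γ), ⨆ (R : ℝ) (_ : 0 < R), Bwt ρ (assoc μ ρ) Γ v t R)
          ≤ ⨆ t ∈ Γ, ⨆ (R : ℝ) (_ : 0 < R), Bwt ρ (assoc μ ρ) Γ v t R :=
        le_iSup (fun t => ⨆ (_ : t ∈ Γ), ⨆ (R : ℝ) (_ : 0 < R), Bwt ρ (assoc μ ρ) Γ v t R) t
      exact ((s1.trans s2).trans s3).trans s4
    have hprod : ∀ X Y S : ℝ≥0∞, (ENNReal.ofReal r)⁻¹ * X * Y ≤ S →
        X * Y ≤ S * ENNReal.ofReal r := by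
      intro X Y S h
      have hXY : X * Y = ENNReal.ofReal r * ((ENNReal.ofReal r)⁻¹ * X * Y) := by
        rw [← mul_assoc, ← mul_assoc, ENNReal.mul_inv_cancel hrne ENNReal.ofReal_ne_top,
          one_mul]
      rw [hXY, mul_comm S _]
      exact mul_le_mul_right h _
    have hBw' : ρ (Q.indicator w) * assoc μ ρ (Q.indicator fun x => (w x)⁻¹)
        ≤ Sw * ENNReal.ofReal r := by
      apply hprod
      have h := hBgen w
      simp only [Bwt, hrQ] at h
      exact h
    have hB1' : ρ (Q.indicator (1 : ℂ → ℝ≥0∞)) * assoc μ ρ (Q.indicator (1 : ℂ → ℝ≥0∞))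
        ≤ S1 * ENNReal.ofReal r := by
      apply hprod
      have h : Bwt ρ (assoc μ ρ) Γ (fun _ => 1) t r ≤ S1 := hBgen (fun _ => 1)
      have heq : Bwt ρ (assoc μ ρ) Γ (fun _ => 1) t r
          = (ENNReal.ofReal r)⁻¹ * ρ (Q.indicator (1 : ℂ → ℝ≥0∞))
            * assoc μ ρ (Q.indicator (1 : ℂ → ℝ≥0∞)) := by
        simp only [Bwt, hrQ, inv_one]
        try rfl
      rw [heq] at h
      exact h
    -- Hölder inequalities
    have hρ1fin : ρ (Q.indicator (1 : ℂ → ℝ≥0∞)) < ⊤ := hρ.indicator_lt_top Q hQmeas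
    have hρwfin : ρ (Q.indicator w) < ⊤ :=
      lt_of_le_of_lt (hρ.mono w _ hwmeas (hwmeas.indicator hQmeas)
        (Filter.Eventually.of_forall fun x => Set.indicator_le_self _ _ x)) hwX
    have hHw : (∫⁻ x in Q, w x ∂μ)
        ≤ ρ (Q.indicator w) * assoc μ ρ (Q.indicator (1 : ℂ → ℝ≥0∞)) := by
      have heq : ∀ x, Q.indicator w x * Q.indicator (1 : ℂ → ℝ≥0∞) x = Q.indicator w x := by
        intro x; by_cases hx : x ∈ Q <;> simp [hx]
      calc (∫⁻ x in Q, w x ∂μ) = ∫⁻ x, Q.indicator w x ∂μ :=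
            (lintegral_indicator hQmeas w).symm
        _ = ∫⁻ x, Q.indicator w x * Q.indicator (1 : ℂ → ℝ≥0∞) x ∂μ :=
            (lintegral_congr heq).symm
        _ ≤ _ := aux_holder hρ (hwmeas.indicator hQmeas)
            (measurable_const.indicator hQmeas) hρwfin
    have hHv : (∫⁻ x in Q, (w x)⁻¹ ∂μ)
        ≤ ρ (Q.indicator (1 : ℂ → ℝ≥0∞)) * assoc μ ρ (Q.indicator fun x => (w x)⁻¹) := by
      have heq : ∀ x, Q.indicator (1 : ℂ → ℝ≥0∞) x * Q.indicator (fun y => (w y)⁻¹) x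
          = Q.indicator (fun y => (w y)⁻¹) x := by
        intro x; by_cases hx : x ∈ Q <;> simp [hx]
      calc (∫⁻ x in Q, (w x)⁻¹ ∂μ) = ∫⁻ x, Q.indicator (fun y => (w y)⁻¹) x ∂μ :=
            (lintegral_indicator hQmeas _).symm
        _ = ∫⁻ x, Q.indicator (1 : ℂ → ℝ≥0∞) x * Q.indicator (fun y => (w y)⁻¹) x ∂μ :=
            (lintegral_congr heq).symm
        _ ≤ _ := aux_holder hρ (measurable_const.indicator hQmeas)
            (hwmeas.inv.indicator hQmeas) hρ1fin
    have hIwIv : (∫⁻ x in Q, w x ∂μ) * (∫⁻ x in Q, (w x)⁻¹ ∂μ) ≤ Kb * (μ Q) ^ 2 := by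
      calc (∫⁻ x in Q, w x ∂μ) * (∫⁻ x in Q, (w x)⁻¹ ∂μ)
          ≤ (ρ (Q.indicator w) * assoc μ ρ (Q.indicator (1 : ℂ → ℝ≥0∞)))
            * (ρ (Q.indicator (1 : ℂ → ℝ≥0∞)) * assoc μ ρ (Q.indicator fun x => (w x)⁻¹)) :=
            mul_le_mul' hHw hHv
        _ = (ρ (Q.indicator w) * assoc μ ρ (Q.indicator fun x => (w x)⁻¹))
            * (ρ (Q.indicator (1 : ℂ → ℝ≥0∞)) * assoc μ ρ (Q.indicator (1 : ℂ → ℝ≥0∞))) := by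
            ring
        _ ≤ (Sw * ENNReal.ofReal r) * (S1 * ENNReal.ofReal r) := mul_le_mul' hBw' hB1'
        _ = (Sw * S1) * (ENNReal.ofReal r * ENNReal.ofReal r) := by ring
        _ ≤ (Sw * S1) * ((2 * μ Q) * (2 * μ Q)) :=
            mul_le_mul_right (mul_le_mul' hrm hrm) _
        _ = Kb * (μ Q) ^ 2 := by rw [hKbdef]; ring
    -- finiteness of the integrals
    obtain ⟨CΓ, hCΓ0, hCΓtop, hCΓle⟩ := hρ.le_integral Γ hΓmeas
    have hIwfin : (∫⁻ x in Q, w x ∂μ) < ⊤ :=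
      lt_of_le_of_lt (lintegral_mono_set hQsub)
        (lt_of_le_of_lt (hCΓle w hwmeas) (ENNReal.mul_lt_top hCΓtop hwX))
    have hIvGamma : (∫⁻ x in Γ, (w x)⁻¹ ∂μ)
        ≤ ρ (Γ.indicator (1 : ℂ → ℝ≥0∞)) * assoc μ ρ (fun x => (w x)⁻¹) := by
      have heq : ∀ x, Γ.indicator (1 : ℂ → ℝ≥0∞) x * (w x)⁻¹
          = Γ.indicator (fun y => (w y)⁻¹) x := by
        intro x; by_cases hx : x ∈ Γ <;> simp [hx]
      calc (∫⁻ x in Γ, (w x)⁻¹ ∂μ) = ∫⁻ x, Γ.indicator (fun y => (w y)⁻¹) x ∂μ :=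
            (lintegral_indicator hΓmeas _).symm
        _ = ∫⁻ x, Γ.indicator (1 : ℂ → ℝ≥0∞) x * (w x)⁻¹ ∂μ := (lintegral_congr heq).symm
        _ ≤ _ := aux_holder hρ (measurable_const.indicator hΓmeas) hwmeas.inv
            (hρ.indicator_lt_top Γ hΓmeas)
    have hIvfin : (∫⁻ x in Q, (w x)⁻¹ ∂μ) < ⊤ :=
      lt_of_le_of_lt (lintegral_mono_set hQsub)
        (lt_of_le_of_lt hIvGamma
          (ENNReal.mul_lt_top (hρ.indicator_lt_top Γ hΓmeas) hwX'))
    -- integrability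
    set ν := μ.restrict Q with hνdef
    have hwaeQ : ∀ᵐ x ∂ν, 0 < w x ∧ w x < ⊤ := ae_restrict_of_ae hwae
    have hwR : Integrable (fun x => (w x).toReal) ν :=
      integrable_toReal_of_lintegral_ne_top hwmeas.aemeasurable hIwfin.ne
    have hvR : Integrable (fun x => ((w x)⁻¹).toReal) ν :=
      integrable_toReal_of_lintegral_ne_top hwmeas.inv.aemeasurable hIvfin.ne
    have hlogmeas : Measurable (logw w) := Real.measurable_log.comp hwmeas.ennreal_toReal
    have hlogint : Integrable (logw w) ν := by
      refine (hwR.add hvR).mono' hlogmeas.aestronglyMeasurable ?_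
      filter_upwards [hwaeQ] with x hx
      have h1 : 0 < (w x).toReal := ENNReal.toReal_pos hx.1.ne' hx.2.ne
      have h2 := aux_abs_log h1
      rw [Real.norm_eq_abs]
      calc |logw w x| = |Real.log (w x).toReal| := rfl
        _ ≤ (w x).toReal + ((w x).toReal)⁻¹ := h2
        _ = (w x).toReal + ((w x)⁻¹).toReal := by rw [ENNReal.toReal_inv]
    haveI : IsFiniteMeasure ν := ⟨by rw [hνdef, Measure.restrict_apply_univ]; exact hQfin⟩
    haveI : NeZero ν := ⟨by
      intro h
      have hz : μ Q = 0 := by rw [← Measure.restrict_apply_univ, ← hνdef, h]; simp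
      exact hm0.ne' hz⟩
    set c : ℝ := avg μ Γ (logw w) t R with hcdef
    have hcval : c = (∫ x, logw w x ∂ν) / mR := rfl
    set g : ℂ → ℝ := fun x => logw w x - c with hgdef
    have hgint : Integrable g ν := hlogint.sub (integrable_const c)
    have hgmeas : Measurable g := hlogmeas.sub measurable_const
    have havgeq : ∀ h : ℂ → ℝ, ⨍ x, h x ∂ν = (∫ x, h x ∂ν) / mR := by
      intro h
      rw [average_eq, hνdef, measureReal_def, Measure.restrict_apply_univ, ← hmRdef, smul_eq_mul,
        inv_mul_eq_div]
    have hintg : ∫ x, g x ∂ν = 0 := by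
      rw [hgdef]
      rw [integral_sub hlogint (integrable_const c), integral_const, hνdef,
        measureReal_def, Measure.restrict_apply_univ, ← hmRdef, smul_eq_mul, hcval]
      field_simp
      exact sub_self _
    -- exp identities
    have hwpos : ∀ᵐ x ∂ν, 0 < (w x).toReal :=
      hwaeQ.mono fun x hx => ENNReal.toReal_pos hx.1.ne' hx.2.ne
    have hexpg_eq : (fun x => Real.exp (g x)) =ᵐ[ν] fun x => Real.exp (-c) * (w x).toReal := by
      filter_upwards [hwpos] with x hx
      show Real.exp (Real.log (w x).toReal - c) = _
      rw [Real.exp_sub, Real.exp_log hx, div_eq_mul_inv, ← Real.exp_neg, mul_comm]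
    have hexpgint : Integrable (fun x => Real.exp (g x)) ν :=
      (hwR.const_mul (Real.exp (-c))).congr hexpg_eq.symm
    have hexpmg_eq : (fun x => Real.exp (-g x)) =ᵐ[ν]
        fun x => Real.exp c * ((w x)⁻¹).toReal := by
      filter_upwards [hwpos] with x hx
      show Real.exp (-(Real.log (w x).toReal - c)) = _
      rw [neg_sub, Real.exp_sub, Real.exp_log hx, div_eq_mul_inv, ENNReal.toReal_inv]
    have hexpmgint : Integrable (fun x => Real.exp (-g x)) ν :=
      (hvR.const_mul (Real.exp c)).congr hexpmg_eq.symm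
    set A : ℝ := ⨍ x, Real.exp (g x) ∂ν with hAdef
    set B : ℝ := ⨍ x, Real.exp (-g x) ∂ν with hBdef
    have havg_g : ⨍ x, g x ∂ν = 0 := by rw [havgeq, hintg, zero_div]
    have hA1 : (1 : ℝ) ≤ A := by
      rw [hAdef]
      have hj := aux_jensen hgint hexpgint
      rwa [havg_g, Real.exp_zero] at hj
    have hB1 : (1 : ℝ) ≤ B := by
      rw [hBdef]
      have hintmg : ∫ x, -g x ∂ν = 0 := by rw [integral_neg, hintg, neg_zero]
      have havg_mg : ⨍ x, -g x ∂ν = 0 := by rw [havgeq, hintmg, zero_div]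
      have hj := aux_jensen (h := fun x => -g x) hgint.neg hexpmgint
      rwa [havg_mg, Real.exp_zero] at hj
    -- integral identities for A and B
    have hIaw : ∫ x, Real.exp (g x) ∂ν = Real.exp (-c) * (∫⁻ x in Q, w x ∂μ).toReal := by
      rw [integral_congr_ae hexpg_eq, integral_const_mul]
      congr 1
      exact integral_toReal hwmeas.aemeasurable (hwaeQ.mono fun x hx => hx.2)
    have hIbv : ∫ x, Real.exp (-g x) ∂ν
        = Real.exp c * (∫⁻ x in Q, (w x)⁻¹ ∂μ).toReal := by
      rw [integral_congr_ae hexpmg_eq, integral_const_mul]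
      congr 1
      exact integral_toReal hwmeas.inv.aemeasurable
        (hwaeQ.mono fun x hx => ENNReal.inv_lt_top.mpr hx.1)
    -- bound on A * B
    have hABle : A * B ≤ Kr := by
      have hfinRHS : Kb * (μ Q) ^ 2 ≠ ⊤ :=
        ENNReal.mul_ne_top hKbtop (ENNReal.pow_ne_top hQfin.ne)
      have htr := ENNReal.toReal_mono hfinRHS hIwIv
      rw [ENNReal.toReal_mul, ENNReal.toReal_mul, ENNReal.toReal_pow, ← hmRdef] at htr
      have hexpc : Real.exp (-c) * Real.exp c = 1 := by
        rw [← Real.exp_add]; simp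
      have hABval : A * B
          = ((∫⁻ x in Q, w x ∂μ).toReal * (∫⁻ x in Q, (w x)⁻¹ ∂μ).toReal) / mR ^ 2 := by
        rw [hAdef, hBdef, havgeq, havgeq, hIaw, hIbv, div_mul_div_comm]
        rw [show Real.exp (-c) * (∫⁻ x in Q, w x ∂μ).toReal
            * (Real.exp c * (∫⁻ x in Q, (w x)⁻¹ ∂μ).toReal)
            = (Real.exp (-c) * Real.exp c)
              * ((∫⁻ x in Q, w x ∂μ).toReal * (∫⁻ x in Q, (w x)⁻¹ ∂μ).toReal) by ring,
          hexpc, one_mul]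
        congr 1
        ring
      rw [hABval, div_le_iff₀ (by positivity)]
      calc (∫⁻ x in Q, w x ∂μ).toReal * (∫⁻ x in Q, (w x)⁻¹ ∂μ).toReal
          ≤ Kb.toReal * mR ^ 2 := htr
        _ ≤ Kr * mR ^ 2 :=
            mul_le_mul_of_nonneg_right (le_max_left _ _) (by positivity)
    have hA0 : (0 : ℝ) ≤ A := le_trans zero_le_one hA1
    have hAK : A ≤ Kr := by
      calc A = A * 1 := (mul_one A).symm
        _ ≤ A * B := mul_le_mul_of_nonneg_left hB1 hA0
        _ ≤ Kr := hABle
    have hBK : B ≤ Kr := by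
      calc B = 1 * B := (one_mul B).symm
        _ ≤ A * B := mul_le_mul_of_nonneg_right hA1 (le_trans zero_le_one hB1)
        _ ≤ Kr := hABle
    -- Jensen for positive and negative parts
    have hgp_int : Integrable (fun x => max (g x) 0) ν := hgint.pos_part
    have hgm_int : Integrable (fun x => max (-g x) 0) ν := hgint.neg.pos_part
    have hexpgp_int : Integrable (fun x => Real.exp (max (g x) 0)) ν := by
      refine (hexpgint.add (integrable_const 1)).mono'
        ((Real.measurable_exp.comp (hgmeas.max measurable_const)).aestronglyMeasurable)
        (Filter.Eventually.of_forall fun x => ?_)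
      rw [Real.norm_eq_abs, abs_of_pos (Real.exp_pos _)]
      rcases le_total (g x) 0 with h | h
      · rw [max_eq_right h, Real.exp_zero]; simp only [Pi.add_apply]
        linarith [Real.exp_pos (g x)]
      · rw [max_eq_left h]; simp only [Pi.add_apply]
        linarith [Real.exp_pos (g x)]
    have hexpgm_int : Integrable (fun x => Real.exp (max (-g x) 0)) ν := by
      refine (hexpmgint.add (integrable_const 1)).mono'
        ((Real.measurable_exp.comp (hgmeas.neg.max measurable_const)).aestronglyMeasurable)
        (Filter.Eventually.of_forall fun x => ?_)
      rw [Real.norm_eq_abs, abs_of_pos (Real.exp_pos _)]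
      rcases le_total (-g x) 0 with h | h
      · rw [max_eq_right h, Real.exp_zero]; simp only [Pi.add_apply]
        linarith [Real.exp_pos (-g x)]
      · rw [max_eq_left h]; simp only [Pi.add_apply]
        linarith [Real.exp_pos (-g x)]
    have hjp : Real.exp (⨍ x, max (g x) 0 ∂ν) ≤ A + 1 := by
      refine (aux_jensen hgp_int hexpgp_int).trans ?_
      have hI : ∫ x, Real.exp (max (g x) 0) ∂ν ≤ ∫ x, (Real.exp (g x) + 1) ∂ν := by
        refine integral_mono hexpgp_int (hexpgint.add (integrable_const 1)) fun x => ?_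
        rcases le_total (g x) 0 with h | h
        · rw [max_eq_right h, Real.exp_zero]; simp only []; linarith [Real.exp_pos (g x)]
        · rw [max_eq_left h]; simp only []; linarith
      have hI2 : ∫ x, (Real.exp (g x) + 1) ∂ν = (∫ x, Real.exp (g x) ∂ν) + mR := by
        rw [integral_add hexpgint (integrable_const 1), integral_const, hνdef,
          measureReal_def, Measure.restrict_apply_univ, ← hmRdef, smul_eq_mul, mul_one]
      rw [havgeq, hAdef, havgeq]
      calc (∫ x, Real.exp (max (g x) 0) ∂ν) / mR
          ≤ ((∫ x, Real.exp (g x) ∂ν) + mR) / mR := by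
            rw [← hI2]
            gcongr
        _ = (∫ x, Real.exp (g x) ∂ν) / mR + 1 := by field_simp
    have hjm : Real.exp (⨍ x, max (-g x) 0 ∂ν) ≤ B + 1 := by
      refine (aux_jensen hgm_int hexpgm_int).trans ?_
      have hI : ∫ x, Real.exp (max (-g x) 0) ∂ν ≤ ∫ x, (Real.exp (-g x) + 1) ∂ν := by
        refine integral_mono hexpgm_int (hexpmgint.add (integrable_const 1)) fun x => ?_
        rcases le_total (-g x) 0 with h | h
        · rw [max_eq_right h, Real.exp_zero]; simp only []; linarith [Real.exp_pos (-g x)]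
        · rw [max_eq_left h]; simp only []; linarith
      have hI2 : ∫ x, (Real.exp (-g x) + 1) ∂ν = (∫ x, Real.exp (-g x) ∂ν) + mR := by
        rw [integral_add hexpmgint (integrable_const 1), integral_const, hνdef,
          measureReal_def, Measure.restrict_apply_univ, ← hmRdef, smul_eq_mul, mul_one]
      rw [havgeq, hBdef, havgeq]
      calc (∫ x, Real.exp (max (-g x) 0) ∂ν) / mR
          ≤ ((∫ x, Real.exp (-g x) ∂ν) + mR) / mR := by
            rw [← hI2]
            gcongr
        _ = (∫ x, Real.exp (-g x) ∂ν) / mR + 1 := by field_simp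
    -- conclude
    have hKrp : (0 : ℝ) < Kr + 1 := by linarith
    have hgp_le : ⨍ x, max (g x) 0 ∂ν ≤ Real.log (Kr + 1) :=
      (Real.le_log_iff_exp_le hKrp).mpr (hjp.trans (by linarith))
    have hgm_le : ⨍ x, max (-g x) 0 ∂ν ≤ Real.log (Kr + 1) :=
      (Real.le_log_iff_exp_le hKrp).mpr (hjm.trans (by linarith))
    have hfinal : (∫ x in Q, |logw w x - c| ∂μ) / mR ≤ 2 * Real.log (Kr + 1) := by
      have heq : ∫ x, |g x| ∂ν = (∫ x, max (g x) 0 ∂ν) + ∫ x, max (-g x) 0 ∂ν := by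
        rw [← integral_add hgp_int hgm_int]
        exact integral_congr_ae (Filter.Eventually.of_forall fun x => aux_abs_eq_max)
      have hrw : (∫ x in Q, |logw w x - c| ∂μ) = ∫ x, |g x| ∂ν := rfl
      rw [hrw, heq, add_div]
      have e1 := hgp_le; rw [havgeq] at e1
      have e2 := hgm_le; rw [havgeq] at e2
      linarith
    exact ENNReal.ofReal_le_ofReal hfinal
  exact lt_of_le_of_lt (iSup₂_le hC) ENNReal.ofReal_lt_top
end
end

section
/- Fix t ∈ Γ and let ρ be a Banach function norm on (Γ,μ). If w ∈ A_X(Γ,t), then the functions Q_t w and Q_t⁰ w are regular, and 0 ≤ α(Q_t w) = α(Q_t⁰ w) ≤ β(Q_t⁰ w) = β(Q_t w) ≤ 1. -/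
open MeasureTheory Filter Set Topology
open scoped ENNReal NNReal

noncomputable section

open SIO


namespace SIOAux
open SIO

variable {Γ : Set ℂ} {μ : Measure ℂ} {t : ℂ} {w : ℂ → ℝ≥0∞}
variable {ρ : (ℂ → ℝ≥0∞) → ℝ≥0∞}

lemma portion_subset (R : ℝ) : portion Γ t R ⊆ Γ := inter_subset_left

lemma portion_mono {R R' : ℝ} (h : R ≤ R') : portion Γ t R ⊆ portion Γ t R' :=
  inter_subset_inter_right _ (Metric.ball_subset_ball h)

lemma annulus_subset_portion {R R' : ℝ} (h : R ≤ R') : annulus Γ t R ⊆ portion Γ t R' :=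
  (diff_subset).trans (portion_mono h)

lemma meas_portion (hΓ : MeasurableSet Γ) (R : ℝ) : MeasurableSet (portion Γ t R) :=
  hΓ.inter measurableSet_ball

lemma meas_annulus (hΓ : MeasurableSet Γ) (R : ℝ) : MeasurableSet (annulus Γ t R) :=
  (meas_portion hΓ R).diff (meas_portion hΓ _)

lemma measure_univ_eq (hΓ : MeasurableSet Γ)
    (hμ : μ = (μH[1] : Measure ℂ).restrict Γ) : μ univ = μ Γ := by
  rw [hμ, Measure.restrict_apply MeasurableSet.univ, Measure.restrict_apply hΓ,
    univ_inter, inter_self]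

lemma measure_le_muGamma (hΓ : MeasurableSet Γ)
    (hμ : μ = (μH[1] : Measure ℂ).restrict Γ) (s : Set ℂ) : μ s ≤ μ Γ := by
  rw [← measure_univ_eq hΓ hμ]; exact measure_mono (subset_univ s)

lemma dist_le_dMax (hΓc : IsCompact Γ) {τ : ℂ} (hτ : τ ∈ Γ) : dist τ t ≤ dMax Γ t :=
  le_csSup ((hΓc.image (continuous_id.dist continuous_const)).bddAbove) ⟨τ, hτ, rfl⟩

lemma Icc_subset_image (hΓc : IsCompact Γ) (hΓconn : IsConnected Γ) (ht : t ∈ Γ) :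
    Icc 0 (dMax Γ t) ⊆ (fun τ => dist τ t) '' Γ := by
  have hcont : Continuous fun τ : ℂ => dist τ t := continuous_id.dist continuous_const
  have himg : IsConnected ((fun τ => dist τ t) '' Γ) := hΓconn.image _ hcont.continuousOn
  have h0 : (0 : ℝ) ∈ (fun τ => dist τ t) '' Γ := ⟨t, ht, by simp⟩
  have hD : dMax Γ t ∈ (fun τ => dist τ t) '' Γ :=
    (hΓc.image hcont).sSup_mem ⟨0, h0⟩
  exact himg.isPreconnected.Icc_subset h0 hD

lemma dMax_pos (hΓc : IsCompact Γ) (hμ : μ = (μH[1] : Measure ℂ).restrict Γ)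
    (hμ0 : 0 < μ Γ) (ht : t ∈ Γ) : 0 < dMax Γ t := by
  by_contra hD
  push_neg at hD
  have hsub : Γ ⊆ {t} := by
    intro τ hτ
    have h1 : dist τ t ≤ 0 := (dist_le_dMax hΓc hτ).trans hD
    have : τ = t := by
      have := dist_nonneg (x := τ) (y := t)
      have : dist τ t = 0 := le_antisymm h1 this
      exact dist_eq_zero.mp this
    simp [this]
  have hmeas : MeasurableSet Γ := hΓc.isClosed.measurableSet
  have : μ Γ ≤ μH[1] ({t} : Set ℂ) := by
    rw [hμ, Measure.restrict_apply hmeas, inter_self]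
    exact measure_mono hsub
  have hsing : μH[1] ({t} : Set ℂ) = 0 :=
    @measure_singleton _ _ (μH[1]) (MeasureTheory.Measure.noAtoms_hausdorff ℂ one_pos) t
  rw [hsing] at this
  exact absurd (le_antisymm this (zero_le)) (ne_of_gt hμ0)

lemma image_dist_superset (hΓc : IsCompact Γ) (hΓconn : IsConnected Γ) (ht : t ∈ Γ)
    {a b : ℝ} (ha : 0 ≤ a) (hb : b ≤ dMax Γ t) (s : Set ℂ)
    (hs : ∀ z ∈ Γ, dist z t ∈ Ico a b → z ∈ s) :
    Ico a b ⊆ (fun τ => dist τ t) '' s := by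
  intro u hu
  have : u ∈ (fun τ => dist τ t) '' Γ := by
    apply Icc_subset_image hΓc hΓconn ht
    exact ⟨ha.trans hu.1, (le_of_lt hu.2).trans hb⟩
  obtain ⟨z, hz, hzu⟩ := this
  refine ⟨z, hs z hz ?_, hzu⟩
  have hzu' : dist z t = u := hzu
  rw [hzu']; exact hu

lemma measure_lower_aux (hΓc : IsCompact Γ)
    (hμ : μ = (μH[1] : Measure ℂ).restrict Γ) {a b : ℝ} (s : Set ℂ) (hsΓ : s ⊆ Γ)
    (hsm : MeasurableSet s) (him : Ico a b ⊆ (fun τ => dist τ t) '' s) :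
    ENNReal.ofReal (b - a) ≤ μ s := by
  have hlip : LipschitzWith 1 (fun z : ℂ => dist z t) := LipschitzWith.dist_left t
  have h1 : μH[1] (Ico a b) ≤ μH[1] ((fun τ : ℂ => dist τ t) '' s) := measure_mono him
  have h2 : μH[1] ((fun τ : ℂ => dist τ t) '' s) ≤ (1 : ℝ≥0∞) ^ (1:ℝ) * μH[1] s :=
    hlip.lipschitzOnWith.hausdorffMeasure_image_le (by norm_num)
  have h3 : μH[1] (Ico a b) = ENNReal.ofReal (b - a) := by
    rw [MeasureTheory.hausdorffMeasure_real]; exact Real.volume_Ico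
  have h4 : μ s = μH[1] s := by
    rw [hμ, Measure.restrict_apply hsm, inter_eq_left.mpr hsΓ]
  rw [h4]
  calc ENNReal.ofReal (b - a) = μH[1] (Ico a b) := h3.symm
    _ ≤ (1:ℝ≥0∞) ^ (1:ℝ) * μH[1] s := h1.trans h2
    _ = μH[1] s := by simp

lemma measure_annulus_lower (hΓc : IsCompact Γ) (hΓconn : IsConnected Γ) (ht : t ∈ Γ)
    (hμ : μ = (μH[1] : Measure ℂ).restrict Γ) {R : ℝ} (hR : 0 < R) (hRD : R ≤ dMax Γ t) :
    ENNReal.ofReal (R / 2) ≤ μ (annulus Γ t R) := by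
  have := measure_lower_aux (t := t) hΓc hμ (a := R/2) (b := R) (annulus Γ t R)
    ((annulus_subset_portion le_rfl).trans (portion_subset R))
    (meas_annulus hΓc.isClosed.measurableSet R)
    (image_dist_superset hΓc hΓconn ht (by linarith) hRD _ ?_)
  · convert this using 2; ring
  · rintro z hz ⟨h1, h2⟩
    exact ⟨⟨hz, h2⟩, fun hz2 => absurd hz2.2 (by simp [Metric.mem_ball]; linarith)⟩

lemma measure_portion_lower (hΓc : IsCompact Γ) (hΓconn : IsConnected Γ) (ht : t ∈ Γ)
    (hμ : μ = (μH[1] : Measure ℂ).restrict Γ) {R : ℝ} (hR : 0 < R) (hRD : R ≤ dMax Γ t) :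
    ENNReal.ofReal R ≤ μ (portion Γ t R) := by
  have := measure_lower_aux (t := t) hΓc hμ (a := 0) (b := R) (portion Γ t R)
    (portion_subset R) (meas_portion hΓc.isClosed.measurableSet R)
    (image_dist_superset hΓc hΓconn ht le_rfl hRD _ ?_)
  · simpa using this
  · rintro z hz ⟨_, h2⟩
    exact ⟨hz, by simpa [Metric.mem_ball] using h2⟩

end SIOAux
namespace SIOAux2
open SIO SIOAux

variable {Γ : Set ℂ} {μ : Measure ℂ} {t : ℂ} {w : ℂ → ℝ≥0∞}
variable {ρ : (ℂ → ℝ≥0∞) → ℝ≥0∞}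

lemma assoc_mono {g₁ g₂ : ℂ → ℝ≥0∞} (h : g₁ ≤ᵐ[μ] g₂) :
    assoc μ ρ g₁ ≤ assoc μ ρ g₂ := by
  refine iSup_mono fun f => iSup_mono fun hf => iSup_mono fun _ => ?_
  refine lintegral_mono_ae ?_
  filter_upwards [h] with x hx
  exact mul_le_mul_right hx _

lemma le_assoc {f g : ℂ → ℝ≥0∞} (hf : Measurable f) (hρf : ρ f ≤ 1) :
    ∫⁻ x, f x * g x ∂μ ≤ assoc μ ρ g := by
  refine le_iSup_of_le f ?_
  rw [iSup_pos hf, iSup_pos hρf]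

lemma rho_one_pos (hρ : IsBFN μ ρ) (hμ0 : 0 < μ univ) : 0 < ρ (fun _ => 1) := by
  rcases eq_or_lt_of_le (zero_le : 0 ≤ ρ (fun _ => 1)) with h | h
  · exfalso
    have h1 : (fun _ : ℂ => (1:ℝ≥0∞)) =ᵐ[μ] 0 := (hρ.eq_zero_iff _ measurable_const).mp h.symm
    have : μ {x | ¬ ((fun _ : ℂ => (1:ℝ≥0∞)) x = 0)} = 0 := h1
    simp only [one_ne_zero, not_false_iff] at this
    rw [show {_x : ℂ | True} = univ from Set.setOf_true] at this
    exact absurd this (ne_of_gt hμ0)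
  · exact h

lemma rho_one_lt_top (hρ : IsBFN μ ρ) : ρ (fun _ => 1) < ⊤ := by
  have := hρ.indicator_lt_top univ MeasurableSet.univ
  rw [Set.indicator_univ] at this; exact this

/-- Hölder inequality for the associate norm. -/
lemma holder (hρ : IsBFN μ ρ) (hμ0 : 0 < μ univ) {f g : ℂ → ℝ≥0∞}
    (hf : Measurable f) (hg : Measurable g) :
    ∫⁻ x, f x * g x ∂μ ≤ ρ f * assoc μ ρ g := by
  rcases eq_or_lt_of_le (zero_le : 0 ≤ ρ f) with h0 | h0
  · -- ρ f = 0 : f = 0 a.e.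
    have hf0 : f =ᵐ[μ] 0 := (hρ.eq_zero_iff f hf).mp h0.symm
    have : ∫⁻ x, f x * g x ∂μ = 0 := by
      rw [← lintegral_zero]
      refine lintegral_congr_ae ?_
      filter_upwards [hf0] with x hx
      simp [hx]
    simp [this]
  rcases eq_or_ne (ρ f) ⊤ with htop | htop
  · rcases eq_or_lt_of_le (zero_le : 0 ≤ assoc μ ρ g) with ha0 | ha0
    · -- assoc g = 0 : then g = 0 a.e.
      have hK0 : 0 < ρ (fun _ => 1) := rho_one_pos hρ hμ0
      have hKt : ρ (fun _ => 1) < ⊤ := rho_one_lt_top hρ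
      set a : ℝ≥0 := (ρ (fun _ => 1)).toNNReal⁻¹ with ha
      have haρ : ρ (fun x => (a : ℝ≥0∞) * 1) = 1 := by
        rw [hρ.smul a (fun _ => 1) measurable_const, ha, ENNReal.coe_inv
          (by simp [ENNReal.toNNReal_eq_zero_iff, ne_of_gt hK0, hKt.ne]),
          ENNReal.coe_toNNReal hKt.ne]
        exact ENNReal.inv_mul_cancel (ne_of_gt hK0) hKt.ne
      have hint : ∫⁻ x, (fun x => (a : ℝ≥0∞) * 1) x * g x ∂μ ≤ assoc μ ρ g :=
        le_assoc measurable_const (le_of_eq haρ)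
      rw [← ha0] at hint
      have ha' : (a : ℝ≥0∞) ≠ 0 := by
        simp [ha, ENNReal.toNNReal_eq_zero_iff, ne_of_gt hK0, hKt.ne]
      have hgint : ∫⁻ x, g x ∂μ = 0 := by
        have : ∫⁻ x, (a : ℝ≥0∞) * g x ∂μ = 0 := by
          refine le_antisymm ?_ (zero_le)
          calc ∫⁻ x, (a:ℝ≥0∞) * g x ∂μ = ∫⁻ x, (fun x => (a : ℝ≥0∞) * 1) x * g x ∂μ := by
                refine lintegral_congr fun x => by ring
            _ ≤ 0 := hint
        rw [lintegral_const_mul _ hg] at this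
        rcases mul_eq_zero.mp this with h | h
        · exact absurd h ha'
        · exact h
      have hgae : g =ᵐ[μ] 0 := (lintegral_eq_zero_iff hg).mp hgint
      have : ∫⁻ x, f x * g x ∂μ = 0 := by
        rw [← lintegral_zero]
        refine lintegral_congr_ae ?_
        filter_upwards [hgae] with x hx
        simp [hx]
      simp [this]
    · rw [htop]
      rw [ENNReal.top_mul (ne_of_gt ha0)]
      exact le_top
  -- 0 < ρ f < ⊤
  set a : ℝ≥0 := (ρ f).toNNReal⁻¹ with ha
  have ha0 : (a : ℝ≥0∞) ≠ 0 := by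
    simp [ha, ENNReal.toNNReal_eq_zero_iff, ne_of_gt h0, htop]
  have hacoe : (a : ℝ≥0∞) = (ρ f)⁻¹ := by
    rw [ha, ENNReal.coe_inv (by simp [ENNReal.toNNReal_eq_zero_iff, ne_of_gt h0, htop]),
      ENNReal.coe_toNNReal htop]
  have haρ : ρ (fun x => (a : ℝ≥0∞) * f x) = 1 := by
    rw [hρ.smul a f hf, hacoe]
    exact ENNReal.inv_mul_cancel (ne_of_gt h0) htop
  have hint : ∫⁻ x, (a : ℝ≥0∞) * f x * g x ∂μ ≤ assoc μ ρ g :=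
    le_assoc (by exact (measurable_const.mul hf)) (le_of_eq haρ)
  have hint2 : (a : ℝ≥0∞) * ∫⁻ x, f x * g x ∂μ ≤ assoc μ ρ g := by
    rw [← lintegral_const_mul (f := fun x => f x * g x) _ (hf.mul hg)]
    calc ∫⁻ x, (a:ℝ≥0∞) * (f x * g x) ∂μ = ∫⁻ x, (a : ℝ≥0∞) * f x * g x ∂μ :=
          lintegral_congr fun x => by ring
      _ ≤ assoc μ ρ g := hint
  calc ∫⁻ x, f x * g x ∂μ = ρ f * ((a:ℝ≥0∞) * ∫⁻ x, f x * g x ∂μ) := by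
        rw [← mul_assoc, hacoe, ENNReal.mul_inv_cancel (ne_of_gt h0) htop, one_mul]
    _ ≤ ρ f * assoc μ ρ g := mul_le_mul_right hint2 _

/-- key integral identity -/
lemma lint_ind_mul (hw : IsWeight μ w) {E : Set ℂ} (hE : MeasurableSet E) :
    ∫⁻ x, E.indicator w x * E.indicator (fun y => (w y)⁻¹) x ∂μ = μ E := by
  have : ∫⁻ x, E.indicator w x * E.indicator (fun y => (w y)⁻¹) x ∂μ
      = ∫⁻ x, E.indicator (fun _ => (1:ℝ≥0∞)) x ∂μ := by
    refine lintegral_congr_ae ?_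
    filter_upwards [hw.2] with x hx
    by_cases hxE : x ∈ E
    · simp only [Set.indicator_of_mem hxE]
      exact ENNReal.mul_inv_cancel (ne_of_gt hx.1) hx.2.ne
    · simp [Set.indicator_of_notMem hxE]
  rw [this]
  simp [lintegral_indicator, hE]

lemma holder_indicator (hρ : IsBFN μ ρ) (hw : IsWeight μ w) (hμ0 : 0 < μ univ)
    {E : Set ℂ} (hE : MeasurableSet E) :
    μ E ≤ ρ (E.indicator w) * assoc μ ρ (E.indicator fun y => (w y)⁻¹) := by
  rw [← lint_ind_mul hw hE]
  exact holder hρ hμ0 (hw.1.indicator hE) ((Measurable.inv hw.1).indicator hE)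

end SIOAux2
namespace SIOAux3
open SIO SIOAux SIOAux2

/-- Bundled hypotheses. -/
structure Setup (Γ : Set ℂ) (μ : Measure ℂ) (t : ℂ) (ρ : (ℂ → ℝ≥0∞) → ℝ≥0∞)
    (w : ℂ → ℝ≥0∞) : Prop where
  hΓc : IsCompact Γ
  hΓconn : IsConnected Γ
  hμ : μ = (μH[1] : Measure ℂ).restrict Γ
  hμ0 : 0 < μ Γ
  hμfin : μ Γ < ⊤
  ht : t ∈ Γ
  hρ : IsBFN μ ρ
  hw : IsWeight μ w
  hwA : MemAt ρ (assoc μ ρ) Γ w t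

variable {Γ : Set ℂ} {μ : Measure ℂ} {t : ℂ} {w : ℂ → ℝ≥0∞}
variable {ρ : (ℂ → ℝ≥0∞) → ℝ≥0∞}

/-- The A_X constant. -/
def SB (μ : Measure ℂ) (ρ : (ℂ → ℝ≥0∞) → ℝ≥0∞) (Γ : Set ℂ) (w : ℂ → ℝ≥0∞) (t : ℂ) : ℝ≥0∞ :=
  ⨆ (R : ℝ) (_ : 0 < R), Bwt ρ (assoc μ ρ) Γ w t R

namespace Setup

variable (hs : Setup Γ μ t ρ w)
include hs

lemma hΓm : MeasurableSet Γ := hs.hΓc.isClosed.measurableSet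

lemma hμu : 0 < μ univ := by rw [measure_univ_eq hs.hΓm hs.hμ]; exact hs.hμ0

lemma hD : 0 < dMax Γ t := dMax_pos hs.hΓc hs.hμ hs.hμ0 hs.ht

lemma SB_lt_top : SB μ ρ Γ w t < ⊤ := hs.hwA

lemma Bwt_le_SB {R : ℝ} (hR : 0 < R) : Bwt ρ (assoc μ ρ) Γ w t R ≤ SB μ ρ Γ w t := by
  refine le_iSup_of_le R ?_; rw [iSup_pos hR]

lemma prod_le_SB {R : ℝ} (hR : 0 < R) :
    ρ ((portion Γ t R).indicator w) *
      assoc μ ρ ((portion Γ t R).indicator fun x => (w x)⁻¹)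
      ≤ ENNReal.ofReal R * SB μ ρ Γ w t := by
  have h1 := hs.Bwt_le_SB hR
  unfold Bwt at h1
  have hR0 : ENNReal.ofReal R ≠ 0 := by simp [hR]
  have hRt : ENNReal.ofReal R ≠ ⊤ := ENNReal.ofReal_ne_top
  calc ρ ((portion Γ t R).indicator w) * assoc μ ρ ((portion Γ t R).indicator fun x => (w x)⁻¹)
      = ENNReal.ofReal R * ((ENNReal.ofReal R)⁻¹ * ρ ((portion Γ t R).indicator w) *
        assoc μ ρ ((portion Γ t R).indicator fun x => (w x)⁻¹)) := by
        rw [← mul_assoc, ← mul_assoc, ENNReal.mul_inv_cancel hR0 hRt, one_mul]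
    _ ≤ ENNReal.ofReal R * SB μ ρ Γ w t := mul_le_mul_right h1 _

lemma one_le_SB : 1 ≤ SB μ ρ Γ w t := by
  set D := dMax Γ t
  have hD := hs.hD
  have h1 : ENNReal.ofReal D ≤ μ (portion Γ t D) :=
    measure_portion_lower hs.hΓc hs.hΓconn hs.ht hs.hμ hD le_rfl
  have h2 : μ (portion Γ t D) ≤ ρ ((portion Γ t D).indicator w) *
      assoc μ ρ ((portion Γ t D).indicator fun x => (w x)⁻¹) :=
    holder_indicator hs.hρ hs.hw hs.hμu (meas_portion hs.hΓm D)
  have h3 := hs.prod_le_SB hD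
  have h4 : ENNReal.ofReal D ≤ ENNReal.ofReal D * SB μ ρ Γ w t := h1.trans (h2.trans h3)
  have hD0 : ENNReal.ofReal D ≠ 0 := (ENNReal.ofReal_pos.mpr hD).ne'
  have hDt : ENNReal.ofReal D ≠ ⊤ := ENNReal.ofReal_ne_top
  calc (1:ℝ≥0∞) = (ENNReal.ofReal D)⁻¹ * ENNReal.ofReal D :=
        (ENNReal.inv_mul_cancel hD0 hDt).symm
    _ ≤ (ENNReal.ofReal D)⁻¹ * (ENNReal.ofReal D * SB μ ρ Γ w t) := mul_le_mul_right h4 _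
    _ = SB μ ρ Γ w t := by
        rw [← mul_assoc, ENNReal.inv_mul_cancel hD0 hDt, one_mul]

lemma annulus_pos {R : ℝ} (hR : 0 < R) (hRD : R ≤ dMax Γ t) : 0 < μ (annulus Γ t R) :=
  lt_of_lt_of_le (by simp [hR]) (measure_annulus_lower hs.hΓc hs.hΓconn hs.ht hs.hμ hR hRD)

lemma annulus_fin (R : ℝ) : μ (annulus Γ t R) < ⊤ :=
  lt_of_le_of_lt (measure_le_muGamma hs.hΓm hs.hμ _) hs.hμfin

lemma holder_annulus {R : ℝ} (hR : 0 < R) (hRD : R ≤ dMax Γ t) :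
    μ (annulus Γ t R) ≤ ρ ((annulus Γ t R).indicator w) *
      assoc μ ρ ((annulus Γ t R).indicator fun y => (w y)⁻¹) :=
  holder_indicator hs.hρ hs.hw hs.hμu (meas_annulus hs.hΓm R)

/-- Upper bound for Gq. -/
lemma Gq_le {R1 R2 Rm : ℝ} (h1 : R1 ≤ Rm) (h2 : R2 ≤ Rm) (hR2 : 0 < R2)
    (hR2D : R2 ≤ dMax Γ t) :
    Gq μ ρ (assoc μ ρ) Γ w t R1 R2 ≤ ENNReal.ofReal (2 * Rm / R2) * SB μ ρ Γ w t := by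
  have hRm : 0 < Rm := lt_of_lt_of_le hR2 h2
  have hnum1 : ρ ((annulus Γ t R1).indicator w) ≤ ρ ((portion Γ t Rm).indicator w) := by
    refine hs.hρ.mono _ _ (hs.hw.1.indicator (meas_portion hs.hΓm Rm))
      (hs.hw.1.indicator (meas_annulus hs.hΓm R1)) (Eventually.of_forall fun x => ?_)
    exact Set.indicator_le_indicator_of_subset (annulus_subset_portion h1) (fun _ => zero_le) x
  have hnum2 : assoc μ ρ ((annulus Γ t R2).indicator fun y => (w y)⁻¹)
      ≤ assoc μ ρ ((portion Γ t Rm).indicator fun y => (w y)⁻¹) := by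
    refine assoc_mono (Eventually.of_forall fun x => ?_)
    exact Set.indicator_le_indicator_of_subset (annulus_subset_portion h2) (fun _ => zero_le) x
  have hden : ENNReal.ofReal (R2 / 2) ≤ μ (annulus Γ t R2) :=
    measure_annulus_lower hs.hΓc hs.hΓconn hs.ht hs.hμ hR2 hR2D
  have hdiv : Gq μ ρ (assoc μ ρ) Γ w t R1 R2 ≤
      (ENNReal.ofReal Rm * SB μ ρ Γ w t) / ENNReal.ofReal (R2 / 2) := by
    unfold Gq
    exact ENNReal.div_le_div ((mul_le_mul' hnum1 hnum2).trans (hs.prod_le_SB hRm)) hden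
  refine hdiv.trans (le_of_eq ?_)
  rw [div_eq_mul_inv, mul_right_comm, ← div_eq_mul_inv,
    ← ENNReal.ofReal_div_of_pos (by linarith : (0:ℝ) < R2 / 2)]
  congr 2
  field_simp

/-- Diagonal lower bound. -/
lemma one_le_Gq_diag {R : ℝ} (hR : 0 < R) (hRD : R ≤ dMax Γ t) :
    1 ≤ Gq μ ρ (assoc μ ρ) Γ w t R R := by
  have hm0 : μ (annulus Γ t R) ≠ 0 := (hs.annulus_pos hR hRD).ne'
  have hmt : μ (annulus Γ t R) ≠ ⊤ := (hs.annulus_fin R).ne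
  unfold Gq
  rw [ENNReal.le_div_iff_mul_le (Or.inl hm0) (Or.inl hmt), one_mul]
  exact hs.holder_annulus hR hRD

/-- Chain inequality. -/
lemma Gq_chain {R1 R2 R3 : ℝ} (hR2 : 0 < R2) (hR2D : R2 ≤ dMax Γ t)
    (hR3 : 0 < R3) (hR3D : R3 ≤ dMax Γ t) :
    Gq μ ρ (assoc μ ρ) Γ w t R1 R3 ≤
      Gq μ ρ (assoc μ ρ) Γ w t R1 R2 * Gq μ ρ (assoc μ ρ) Γ w t R2 R3 := by
  set a1 := ρ ((annulus Γ t R1).indicator w)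
  set a2 := ρ ((annulus Γ t R2).indicator w)
  set b2 := assoc μ ρ ((annulus Γ t R2).indicator fun y => (w y)⁻¹)
  set b3 := assoc μ ρ ((annulus Γ t R3).indicator fun y => (w y)⁻¹)
  set m2 := μ (annulus Γ t R2)
  set m3 := μ (annulus Γ t R3)
  have hm20 : m2 ≠ 0 := (hs.annulus_pos hR2 hR2D).ne'
  have hm2t : m2 ≠ ⊤ := (hs.annulus_fin R2).ne
  have hH : m2 ≤ a2 * b2 := hs.holder_annulus hR2 hR2D
  show a1 * b3 / m3 ≤ (a1 * b2 / m2) * (a2 * b3 / m3)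
  calc a1 * b3 / m3 = (a1 * (m2 * m2⁻¹) * b3) / m3 := by
        rw [ENNReal.mul_inv_cancel hm20 hm2t, mul_one]
    _ ≤ (a1 * ((a2 * b2) * m2⁻¹) * b3) / m3 := by
        refine ENNReal.div_le_div ?_ le_rfl
        exact mul_le_mul' (mul_le_mul_right (mul_le_mul_left hH _) _) le_rfl
    _ = (a1 * b2 * m2⁻¹) * (a2 * b3 * m3⁻¹) := by
        rw [div_eq_mul_inv]; ring
    _ = (a1 * b2 / m2) * (a2 * b3 / m3) := by
        rw [div_eq_mul_inv, div_eq_mul_inv]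

end Setup
end SIOAux3
namespace SIOAux3
open SIO SIOAux SIOAux2

variable {Γ : Set ℂ} {μ : Measure ℂ} {t : ℂ} {w : ℂ → ℝ≥0∞}
variable {ρ : (ℂ → ℝ≥0∞) → ℝ≥0∞}

/-- Unified supremum form. -/
def Psi (μ : Measure ℂ) (ρ : (ℂ → ℝ≥0∞) → ℝ≥0∞) (Γ : Set ℂ) (w : ℂ → ℝ≥0∞) (t : ℂ)
    (y δ : ℝ) : ℝ≥0∞ :=
  ⨆ (r : ℝ) (_ : 0 < r ∧ r ≤ δ ∧ r ≤ dMax Γ t ∧ y * r ≤ dMax Γ t),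
    Gq μ ρ (assoc μ ρ) Γ w t (y * r) r

lemma le_Psi {y δ r : ℝ} (h : 0 < r ∧ r ≤ δ ∧ r ≤ dMax Γ t ∧ y * r ≤ dMax Γ t) :
    Gq μ ρ (assoc μ ρ) Γ w t (y * r) r ≤ Psi μ ρ Γ w t y δ :=
  le_iSup₂_of_le r h le_rfl

lemma Psi_mono {y δ δ' : ℝ} (h : δ ≤ δ') : Psi μ ρ Γ w t y δ ≤ Psi μ ρ Γ w t y δ' :=
  iSup₂_le fun r hc => le_Psi ⟨hc.1, hc.2.1.trans h, hc.2.2⟩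

lemma Psi_le_PsiD {y δ : ℝ} : Psi μ ρ Γ w t y δ ≤ Psi μ ρ Γ w t y (dMax Γ t) :=
  iSup₂_le fun r hc => le_Psi ⟨hc.1, hc.2.2.1, hc.2.2⟩

namespace Setup

variable (hs : Setup Γ μ t ρ w)
include hs

lemma Psi_ub {y δ : ℝ} (hy : 0 < y) :
    Psi μ ρ Γ w t y δ ≤ ENNReal.ofReal (2 * max 1 y) * SB μ ρ Γ w t := by
  refine iSup₂_le fun r hc => ?_
  obtain ⟨hr, hrδ, hrD, hyrD⟩ := hc
  have h := hs.Gq_le (R1 := y*r) (R2 := r) (Rm := r * max 1 y)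
    (by nlinarith [le_max_right (1:ℝ) y]) (by nlinarith [le_max_left (1:ℝ) y]) hr hrD
  refine h.trans (le_of_eq ?_)
  congr 2
  field_simp

lemma Gq_lb {y r : ℝ} (hy : 0 < y) (hr : 0 < r) (hrD : r ≤ dMax Γ t)
    (hyrD : y * r ≤ dMax Γ t) :
    (ENNReal.ofReal (2 * max 1 y⁻¹) * SB μ ρ Γ w t)⁻¹ ≤ Gq μ ρ (assoc μ ρ) Γ w t (y * r) r := by
  set c := ENNReal.ofReal (2 * max 1 y⁻¹) * SB μ ρ Γ w t with hc
  have hyr : 0 < y * r := mul_pos hy hr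
  have h1 : (1:ℝ≥0∞) ≤ Gq μ ρ (assoc μ ρ) Γ w t r r := hs.one_le_Gq_diag hr hrD
  have h2 : Gq μ ρ (assoc μ ρ) Γ w t r r ≤
      Gq μ ρ (assoc μ ρ) Γ w t r (y*r) * Gq μ ρ (assoc μ ρ) Γ w t (y*r) r :=
    hs.Gq_chain hyr hyrD hr hrD
  have h3 : Gq μ ρ (assoc μ ρ) Γ w t r (y*r) ≤ c := by
    have h := hs.Gq_le (R1 := r) (R2 := y*r) (Rm := r * max 1 y)
      (by nlinarith [le_max_left (1:ℝ) y]) (by nlinarith [le_max_right (1:ℝ) y]) hyr hyrD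
    refine h.trans (le_of_eq ?_)
    rw [hc]
    congr 2
    rcases le_total 1 y with h1y | h1y
    · rw [max_eq_right h1y, max_eq_left (by rw [inv_le_one_iff₀]; right; exact h1y)]
      field_simp
    · have hinv1 : (1:ℝ) ≤ y⁻¹ := by
        have := one_div_le_one_div_of_le hy h1y
        simpa [one_div] using this
      rw [max_eq_left h1y, max_eq_right hinv1]
      field_simp
  have hSB1 := hs.one_le_SB
  have hc0 : c ≠ 0 := by
    rw [hc]
    refine mul_ne_zero ?_ (fun h => by rw [h] at hSB1; simp at hSB1)
    have h2y : (0:ℝ) < 2 * max 1 y⁻¹ :=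
      mul_pos two_pos (lt_of_lt_of_le one_pos (le_max_left _ _))
    simp [ENNReal.ofReal_eq_zero, not_le, h2y]
  have hct : c ≠ ⊤ := by
    rw [hc]
    exact ENNReal.mul_ne_top ENNReal.ofReal_ne_top hs.SB_lt_top.ne
  have h4 : (1:ℝ≥0∞) ≤ c * Gq μ ρ (assoc μ ρ) Γ w t (y*r) r :=
    h1.trans (h2.trans (mul_le_mul_left h3 _))
  calc c⁻¹ = c⁻¹ * 1 := (mul_one _).symm
    _ ≤ c⁻¹ * (c * Gq μ ρ (assoc μ ρ) Γ w t (y*r) r) := mul_le_mul_right h4 _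
    _ = Gq μ ρ (assoc μ ρ) Γ w t (y*r) r := by
        rw [← mul_assoc, ENNReal.inv_mul_cancel hc0 hct, one_mul]

lemma Psi_lb {y δ : ℝ} (hy : 0 < y) (hδ : 0 < δ) :
    (ENNReal.ofReal (2 * max 1 y⁻¹) * SB μ ρ Γ w t)⁻¹ ≤ Psi μ ρ Γ w t y δ := by
  set D := dMax Γ t with hD
  have hDpos := hs.hD
  have hmax : (0:ℝ) < max 1 y := lt_of_lt_of_le one_pos (le_max_left _ _)
  set r := min δ (D / max 1 y) with hr
  have hr0 : 0 < r := lt_min hδ (by positivity)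
  have hrδ : r ≤ δ := min_le_left _ _
  have hrD : r ≤ D := (min_le_right _ _).trans (by
    rw [div_le_iff₀ hmax]; nlinarith [le_max_left (1:ℝ) y])
  have hyrD : y * r ≤ D := by
    have h1 : r ≤ D / max 1 y := min_le_right _ _
    have h2 : y * r ≤ max 1 y * r := by nlinarith [le_max_right (1:ℝ) y]
    have h3 : max 1 y * r ≤ max 1 y * (D / max 1 y) := by nlinarith
    rw [mul_div_cancel₀ _ hmax.ne'] at h3
    linarith
  exact (hs.Gq_lb hy hr0 hrD hyrD).trans (le_Psi ⟨hr0, hrδ, hrD, hyrD⟩)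

lemma Qt_eq_Psi {x : ℝ} (hx : 0 < x) :
    Qt μ ρ (assoc μ ρ) Γ w t x = Psi μ ρ Γ w t x (dMax Γ t) := by
  set D := dMax Γ t with hD
  unfold Qt
  by_cases hx1 : x ≤ 1
  · rw [if_pos hx1]
    apply le_antisymm
    · refine iSup₂_le fun R hR => ?_
      exact le_Psi ⟨hR.1, hR.2, hR.2, by nlinarith [hR.1, hR.2]⟩
    · refine iSup₂_le fun r hc => ?_
      exact le_iSup₂_of_le r ⟨hc.1, hc.2.2.1⟩ le_rfl
  · rw [if_neg hx1]
    push_neg at hx1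
    apply le_antisymm
    · refine iSup₂_le fun R hR => ?_
      have hxi : x * (x⁻¹ * R) = R := by field_simp
      have h1 : 0 < x⁻¹ * R := mul_pos (inv_pos.mpr hx) hR.1
      have h2 : x⁻¹ * R ≤ D := by
        calc x⁻¹ * R ≤ 1 * R := by
              have : x⁻¹ ≤ 1 := by rw [inv_le_one_iff₀]; right; linarith
              nlinarith [hR.1]
          _ = R := one_mul R
          _ ≤ D := hR.2
      have := le_Psi (μ := μ) (ρ := ρ) (Γ := Γ) (w := w) (t := t)
        (y := x) (δ := D) (r := x⁻¹ * R) ⟨h1, h2, h2, by rw [hxi]; exact hR.2⟩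
      rw [hxi] at this
      exact this
    · refine iSup₂_le fun r hc => ?_
      obtain ⟨hr0, _, hrD, hxrD⟩ := hc
      have hxr0 : 0 < x * r := mul_pos hx hr0
      have hinv : x⁻¹ * (x * r) = r := by field_simp
      have hmem : x * r ∈ Ioc 0 D := ⟨hxr0, hxrD⟩
      refine le_trans (le_of_eq ?_) (le_iSup₂ (x * r) hmem)
      exact congrArg (fun z => Gq μ ρ (assoc μ ρ) Γ w t (x * r) z) hinv.symm

lemma Qt_ub {x : ℝ} (hx : 0 < x) :
    Qt μ ρ (assoc μ ρ) Γ w t x ≤ ENNReal.ofReal (2 * max 1 x) * SB μ ρ Γ w t := by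
  rw [hs.Qt_eq_Psi hx]; exact hs.Psi_ub hx

lemma Qt_lb {x : ℝ} (hx : 0 < x) :
    (ENNReal.ofReal (2 * max 1 x⁻¹) * SB μ ρ Γ w t)⁻¹ ≤ Qt μ ρ (assoc μ ρ) Γ w t x := by
  rw [hs.Qt_eq_Psi hx]; exact hs.Psi_lb hx hs.hD

lemma Qt_submult {x y : ℝ} (hx : 0 < x) (hy : 0 < y) :
    Qt μ ρ (assoc μ ρ) Γ w t (x * y) ≤
      Qt μ ρ (assoc μ ρ) Γ w t x * Qt μ ρ (assoc μ ρ) Γ w t y := by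
  set D := dMax Γ t with hD
  rw [hs.Qt_eq_Psi (mul_pos hx hy), hs.Qt_eq_Psi hx, hs.Qt_eq_Psi hy]
  wlog hxy : x ≤ y generalizing x y
  · rw [mul_comm (Psi μ ρ Γ w t x D), mul_comm x y]
    exact this hy hx (by linarith)
  refine iSup₂_le fun b hc => ?_
  obtain ⟨hb0, hbδ, hbD, habD⟩ := hc
  set c := x * b with hcdef
  have hc0 : 0 < c := mul_pos hx hb0
  have hcD : c ≤ D := by
    rcases le_or_gt x 1 with h | h
    · calc c = x * b := rfl
        _ ≤ 1 * b := by nlinarith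
        _ = b := one_mul b
        _ ≤ D := hbD
    · have hy1 : 1 < y := lt_of_lt_of_le h hxy
      calc c = x * b := rfl
        _ ≤ x * (y * b) := by nlinarith
        _ = x * y * b := by ring
        _ ≤ D := habD
  have key : Gq μ ρ (assoc μ ρ) Γ w t (x * y * b) b ≤
      Gq μ ρ (assoc μ ρ) Γ w t (x * y * b) c * Gq μ ρ (assoc μ ρ) Γ w t c b :=
    hs.Gq_chain hc0 hcD hb0 hbD
  have h1 : Gq μ ρ (assoc μ ρ) Γ w t (x * y * b) c ≤ Psi μ ρ Γ w t y D := by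
    have heq : x * y * b = y * c := by rw [hcdef]; ring
    rw [heq]
    exact le_Psi ⟨hc0, hcD, hcD, by rw [← heq]; exact habD⟩
  have h2 : Gq μ ρ (assoc μ ρ) Γ w t c b ≤ Psi μ ρ Γ w t x D :=
    le_Psi ⟨hb0, hbD, hbD, hcD⟩
  calc Gq μ ρ (assoc μ ρ) Γ w t (x * y * b) b ≤ _ * _ := key
    _ ≤ Psi μ ρ Γ w t y D * Psi μ ρ Γ w t x D := mul_le_mul' h1 h2
    _ = Psi μ ρ Γ w t x D * Psi μ ρ Γ w t y D := mul_comm _ _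

lemma Salpha {u y : ℝ} (hu : 0 < u) (hu1 : u ≤ 1) (hy : 0 < y) (hy1 : y ≤ 1) :
    Qt μ ρ (assoc μ ρ) Γ w t (u * y) ≤
      Psi μ ρ Γ w t y (u * dMax Γ t) * Qt μ ρ (assoc μ ρ) Γ w t u := by
  set D := dMax Γ t with hD
  rw [hs.Qt_eq_Psi (mul_pos hu hy), hs.Qt_eq_Psi hu]
  refine iSup₂_le fun R hc => ?_
  obtain ⟨hR0, hRδ, hRD, habD⟩ := hc
  have huR0 : 0 < u * R := mul_pos hu hR0
  have huRD : u * R ≤ D := by nlinarith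
  have key : Gq μ ρ (assoc μ ρ) Γ w t (u * y * R) R ≤
      Gq μ ρ (assoc μ ρ) Γ w t (u * y * R) (u * R) * Gq μ ρ (assoc μ ρ) Γ w t (u * R) R :=
    hs.Gq_chain huR0 huRD hR0 hRD
  have h1 : Gq μ ρ (assoc μ ρ) Γ w t (u * y * R) (u * R) ≤ Psi μ ρ Γ w t y (u * D) := by
    have heq : u * y * R = y * (u * R) := by ring
    rw [heq]
    refine le_Psi ⟨huR0, by nlinarith, huRD, ?_⟩
    calc y * (u * R) ≤ 1 * (u * R) := by nlinarith
      _ = u * R := one_mul _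
      _ ≤ D := huRD
  have h2 : Gq μ ρ (assoc μ ρ) Γ w t (u * R) R ≤ Psi μ ρ Γ w t u D :=
    le_Psi ⟨hR0, hRD, hRD, huRD⟩
  exact key.trans (mul_le_mul' h1 h2)

lemma Sbeta {u y : ℝ} (hu : 1 ≤ u) (hy : 1 ≤ y) :
    Qt μ ρ (assoc μ ρ) Γ w t (u * y) ≤
      Qt μ ρ (assoc μ ρ) Γ w t u * Psi μ ρ Γ w t y (dMax Γ t / (u * y)) := by
  set D := dMax Γ t with hD
  have hu0 : (0:ℝ) < u := lt_of_lt_of_le one_pos hu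
  have hy0 : (0:ℝ) < y := lt_of_lt_of_le one_pos hy
  rw [hs.Qt_eq_Psi (mul_pos hu0 hy0), hs.Qt_eq_Psi hu0]
  refine iSup₂_le fun R hc => ?_
  obtain ⟨hR0, hRδ, hRD, habD⟩ := hc
  have hyR0 : 0 < y * R := mul_pos hy0 hR0
  have hyRD : y * R ≤ D := by nlinarith
  have key : Gq μ ρ (assoc μ ρ) Γ w t (u * y * R) R ≤
      Gq μ ρ (assoc μ ρ) Γ w t (u * y * R) (y * R) * Gq μ ρ (assoc μ ρ) Γ w t (y * R) R :=
    hs.Gq_chain hyR0 hyRD hR0 hRD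
  have h1 : Gq μ ρ (assoc μ ρ) Γ w t (u * y * R) (y * R) ≤ Psi μ ρ Γ w t u D := by
    have heq : u * y * R = u * (y * R) := by ring
    rw [heq]
    refine le_Psi ⟨hyR0, hyRD, hyRD, by rw [← heq]; exact habD⟩
  have h2 : Gq μ ρ (assoc μ ρ) Γ w t (y * R) R ≤ Psi μ ρ Γ w t y (D / (u * y)) := by
    refine le_Psi ⟨hR0, ?_, hRD, hyRD⟩
    rw [le_div_iff₀ (by positivity)]
    nlinarith
  exact key.trans (mul_le_mul' h1 h2)

lemma Talpha {u y : ℝ} (hu : 0 < u) (hu1 : u ≤ 1) (hy : 0 < y) (hy1 : y ≤ 1) (n : ℕ) :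
    Qt μ ρ (assoc μ ρ) Γ w t (u * y ^ n) ≤
      Qt μ ρ (assoc μ ρ) Γ w t u * Psi μ ρ Γ w t y (u * dMax Γ t) ^ n := by
  induction n with
  | zero => simp
  | succ n ih =>
    have huyn : 0 < u * y ^ n := by positivity
    have huyn1 : u * y ^ n ≤ 1 := by
      have h1 : y ^ n ≤ 1 := pow_le_one₀ hy.le hy1
      nlinarith [pow_nonneg hy.le n]
    have step := hs.Salpha huyn huyn1 hy hy1
    have hmono : Psi μ ρ Γ w t y (u * y ^ n * dMax Γ t) ≤ Psi μ ρ Γ w t y (u * dMax Γ t) := by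
      refine Psi_mono ?_
      have hyn1 : y ^ n ≤ 1 := pow_le_one₀ hy.le hy1
      have hpos := mul_nonneg (mul_nonneg hu.le hs.hD.le) (sub_nonneg.mpr hyn1)
      nlinarith [hpos]
    calc Qt μ ρ (assoc μ ρ) Γ w t (u * y ^ (n+1))
        = Qt μ ρ (assoc μ ρ) Γ w t (u * y ^ n * y) := by ring_nf
      _ ≤ Psi μ ρ Γ w t y (u * y ^ n * dMax Γ t) * Qt μ ρ (assoc μ ρ) Γ w t (u * y ^ n) := step
      _ ≤ Psi μ ρ Γ w t y (u * dMax Γ t) *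
            (Qt μ ρ (assoc μ ρ) Γ w t u * Psi μ ρ Γ w t y (u * dMax Γ t) ^ n) :=
          mul_le_mul' hmono ih
      _ = Qt μ ρ (assoc μ ρ) Γ w t u * Psi μ ρ Γ w t y (u * dMax Γ t) ^ (n+1) := by ring

lemma Tbeta {u y : ℝ} (hu : 1 ≤ u) (hy : 1 ≤ y) (n : ℕ) :
    Qt μ ρ (assoc μ ρ) Γ w t (u * y ^ n) ≤
      Qt μ ρ (assoc μ ρ) Γ w t u * Psi μ ρ Γ w t y (dMax Γ t / (u * y)) ^ n := by
  have hu0 : (0:ℝ) < u := lt_of_lt_of_le one_pos hu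
  have hy0 : (0:ℝ) < y := lt_of_lt_of_le one_pos hy
  induction n with
  | zero => simp
  | succ n ih =>
    have hyn : (1:ℝ) ≤ y ^ n := one_le_pow₀ hy
    have huyn : 1 ≤ u * y ^ n := by nlinarith
    have step := hs.Sbeta huyn hy
    have hmono : Psi μ ρ Γ w t y (dMax Γ t / (u * y ^ n * y)) ≤
        Psi μ ρ Γ w t y (dMax Γ t / (u * y)) := by
      refine Psi_mono ?_
      refine div_le_div_of_nonneg_left hs.hD.le (by positivity)
        (by nlinarith [mul_nonneg (mul_nonneg hu0.le hy0.le) (sub_nonneg.mpr hyn)])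
    calc Qt μ ρ (assoc μ ρ) Γ w t (u * y ^ (n+1))
        = Qt μ ρ (assoc μ ρ) Γ w t (u * y ^ n * y) := by ring_nf
      _ ≤ Qt μ ρ (assoc μ ρ) Γ w t (u * y ^ n) *
            Psi μ ρ Γ w t y (dMax Γ t / (u * y ^ n * y)) := step
      _ ≤ (Qt μ ρ (assoc μ ρ) Γ w t u * Psi μ ρ Γ w t y (dMax Γ t / (u * y)) ^ n) *
            Psi μ ρ Γ w t y (dMax Γ t / (u * y)) := mul_le_mul' ih hmono
      _ = Qt μ ρ (assoc μ ρ) Γ w t u * Psi μ ρ Γ w t y (dMax Γ t / (u * y)) ^ (n+1) := by ring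

lemma Qt0_le_Psi {x δ : ℝ} (hx : 0 < x) (hδ : 0 < δ) :
    Qt0 μ ρ (assoc μ ρ) Γ w t x ≤ Psi μ ρ Γ w t x δ := by
  unfold Qt0
  refine limsup_le_of_le (by isBoundedDefault) ?_
  have hmax : (0:ℝ) < max 1 x := lt_of_lt_of_le one_pos (le_max_left _ _)
  have hε : (0:ℝ) < min δ (dMax Γ t / max 1 x) := lt_min hδ (div_pos hs.hD hmax)
  filter_upwards [Ioo_mem_nhdsGT_of_mem (Set.mem_Ico.mpr ⟨le_refl (0:ℝ), hε⟩)] with R hR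
  obtain ⟨hR0, hRlt⟩ := hR
  have hRδ : R ≤ δ := le_of_lt (lt_of_lt_of_le hRlt (min_le_left _ _))
  have hRD' : R ≤ dMax Γ t / max 1 x := le_of_lt (lt_of_lt_of_le hRlt (min_le_right _ _))
  have hRD : R ≤ dMax Γ t := hRD'.trans (div_le_self hs.hD.le (le_max_left _ _))
  have hxRD : x * R ≤ dMax Γ t := by
    have : max 1 x * R ≤ dMax Γ t := by
      rw [← le_div_iff₀' hmax]; exact hRD'
    nlinarith [le_max_right (1:ℝ) x]
  exact le_Psi ⟨hR0, hRδ, hRD, hxRD⟩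

lemma Qt0_lb {x : ℝ} (hx : 0 < x) :
    (ENNReal.ofReal (2 * max 1 x⁻¹) * SB μ ρ Γ w t)⁻¹ ≤ Qt0 μ ρ (assoc μ ρ) Γ w t x := by
  unfold Qt0
  refine le_limsup_of_frequently_le ?_ (by isBoundedDefault)
  refine Eventually.frequently ?_
  have hmax : (0:ℝ) < max 1 x := lt_of_lt_of_le one_pos (le_max_left _ _)
  have hε : (0:ℝ) < dMax Γ t / max 1 x := div_pos hs.hD hmax
  filter_upwards [Ioo_mem_nhdsGT_of_mem (Set.mem_Ico.mpr ⟨le_refl (0:ℝ), hε⟩)] with R hR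
  obtain ⟨hR0, hRlt⟩ := hR
  have hRD : R ≤ dMax Γ t := hRlt.le.trans (div_le_self hs.hD.le (le_max_left _ _))
  have hxRD : x * R ≤ dMax Γ t := by
    have : max 1 x * R ≤ dMax Γ t := by
      rw [← le_div_iff₀' hmax]; exact hRlt.le
    nlinarith [le_max_right (1:ℝ) x]
  exact hs.Gq_lb hx hR0 hRD hxRD

lemma Psi_approx {y : ℝ} {a : ℝ≥0∞} (hy : 0 < y) (h : Qt0 μ ρ (assoc μ ρ) Γ w t y < a) :
    ∃ δ : ℝ, 0 < δ ∧ δ ≤ dMax Γ t ∧ Psi μ ρ Γ w t y δ < a := by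
  have hrep : Qt0 μ ρ (assoc μ ρ) Γ w t y =
      ⨅ (ε : ℝ) (_ : 0 < ε), ⨆ R ∈ Ioo (0:ℝ) ε, Gq μ ρ (assoc μ ρ) Γ w t (y * R) R := by
    unfold Qt0
    exact (nhdsGT_basis (0:ℝ)).limsup_eq_iInf_iSup
  rw [hrep] at h
  obtain ⟨ε, hε⟩ := iInf_lt_iff.mp h
  have hε0 : 0 < ε := by
    by_contra h0
    rw [iInf_neg h0] at hε
    exact absurd hε (by simp)
  rw [iInf_pos hε0] at hε
  refine ⟨min (ε/2) (dMax Γ t), lt_min (by linarith) hs.hD, min_le_right _ _, ?_⟩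
  refine lt_of_le_of_lt ?_ hε
  refine iSup₂_le fun r hc => ?_
  obtain ⟨hr0, hrδ, _, _⟩ := hc
  have : r ∈ Ioo (0:ℝ) ε := ⟨hr0, lt_of_le_of_lt (hrδ.trans (min_le_left _ _)) (by linarith)⟩
  exact le_iSup₂_of_le r this le_rfl

end Setup
end SIOAux3
namespace SIOAux3
open SIO SIOAux SIOAux2

lemma toReal_le_of_le {a S : ℝ≥0∞} {c : ℝ} (hSfin : S ≠ ⊤) (hc : 0 ≤ c)
    (h : a ≤ ENNReal.ofReal c * S) : a.toReal ≤ c * S.toReal := by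
  have h2 := ENNReal.toReal_mono (ENNReal.mul_ne_top ENNReal.ofReal_ne_top hSfin) h
  rwa [ENNReal.toReal_mul, ENNReal.toReal_ofReal hc] at h2

lemma le_toReal_of_inv {a S : ℝ≥0∞} {c : ℝ} (hafin : a ≠ ⊤) (hc : 0 ≤ c)
    (h : (ENNReal.ofReal c * S)⁻¹ ≤ a) : 1 / (c * S.toReal) ≤ a.toReal := by
  have h2 := ENNReal.toReal_mono hafin h
  rwa [ENNReal.toReal_inv, ENNReal.toReal_mul, ENNReal.toReal_ofReal hc, ← one_div] at h2

variable {Γ : Set ℂ} {μ : Measure ℂ} {t : ℂ} {w : ℂ → ℝ≥0∞}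
variable {ρ : (ℂ → ℝ≥0∞) → ℝ≥0∞}

namespace Setup

variable (hs : Setup Γ μ t ρ w)
include hs

lemma SB_ne_top : SB μ ρ Γ w t ≠ ⊤ := hs.SB_lt_top.ne

lemma s_ge_one : 1 ≤ (SB μ ρ Γ w t).toReal := by
  have := ENNReal.toReal_mono hs.SB_ne_top hs.one_le_SB
  simpa using this

lemma Qt_ne_top {x : ℝ} (hx : 0 < x) : Qt μ ρ (assoc μ ρ) Γ w t x ≠ ⊤ :=
  (lt_of_le_of_lt (hs.Qt_ub hx)
    (ENNReal.mul_lt_top ENNReal.ofReal_lt_top hs.SB_lt_top)).ne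

lemma Psi_ne_top {y δ : ℝ} (hy : 0 < y) : Psi μ ρ Γ w t y δ ≠ ⊤ :=
  (lt_of_le_of_lt (hs.Psi_ub hy)
    (ENNReal.mul_lt_top ENNReal.ofReal_lt_top hs.SB_lt_top)).ne

lemma Qt0_ne_top {x : ℝ} (hx : 0 < x) : Qt0 μ ρ (assoc μ ρ) Γ w t x ≠ ⊤ :=
  ((hs.Qt0_le_Psi hx one_pos).trans_lt
    (lt_of_le_of_lt (hs.Psi_ub hx)
      (ENNReal.mul_lt_top ENNReal.ofReal_lt_top hs.SB_lt_top))).ne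

lemma Qt0_pos {x : ℝ} (hx : 0 < x) : 0 < Qt0 μ ρ (assoc μ ρ) Γ w t x := by
  refine lt_of_lt_of_le ?_ (hs.Qt0_lb hx)
  rw [ENNReal.inv_pos]
  exact ENNReal.mul_ne_top ENNReal.ofReal_ne_top hs.SB_ne_top

end Setup
end SIOAux3
namespace SIOReal
open Set

lemma arch {a b : ℝ} (h : ∀ n : ℕ, 1 ≤ n → (n : ℝ) * a ≤ b) : a ≤ 0 := by
  by_contra hpos
  push_neg at hpos
  obtain ⟨n, hn⟩ := exists_nat_gt (b / a)
  have hn' : b / a < ((n + 1 : ℕ) : ℝ) := by push_cast; push_cast at hn; linarith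
  have h2 := h (n + 1) (Nat.le_add_left 1 n)
  rw [div_lt_iff₀ hpos] at hn'
  linarith

lemma div_le_div_neg {a b c : ℝ} (hc : c < 0) (h : b ≤ a) : a / c ≤ b / c :=
  div_le_div_of_nonpos_of_le hc.le h

set_option maxHeartbeats 2000000 in
/-- The main real-analysis lemma. -/
lemma real_main (F F0 : ℝ → ℝ) (P : ℝ → ℝ → ℝ) (K D : ℝ)
    (hK : 2 ≤ K) (hD : 0 < D)
    (hFub : ∀ x, 0 < x → F x ≤ K * max 1 x)
    (hFlb : ∀ x, 0 < x → 1 / (K * max 1 x⁻¹) ≤ F x)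
    (hF0lb : ∀ x, 0 < x → 1 / (K * max 1 x⁻¹) ≤ F0 x)
    (hPlb : ∀ y δ, 0 < y → 0 < δ → 1 / (K * max 1 y⁻¹) ≤ P y δ)
    (hPleF : ∀ y δ, 0 < y → P y δ ≤ F y)
    (hF0leP : ∀ y δ, 0 < y → 0 < δ → F0 y ≤ P y δ)
    (hPmono : ∀ y δ δ', 0 < y → δ ≤ δ' → P y δ ≤ P y δ')
    (hPapprox : ∀ y c, 0 < y → 1 < c → ∃ δ, 0 < δ ∧ δ ≤ D ∧ P y δ ≤ F0 y * c)
    (hFmul : ∀ x y, 0 < x → 0 < y → F (x * y) ≤ F x * F y)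
    (hTa : ∀ x y (n : ℕ), 0 < x → x ≤ 1 → 0 < y → y ≤ 1 →
      F (x * y ^ n) ≤ F x * (P y (x * D)) ^ n)
    (hTb : ∀ u y (n : ℕ), 1 ≤ u → 1 ≤ y → F (u * y ^ n) ≤ F u * (P y (D / (u * y))) ^ n) :
    0 ≤ sSup ((fun x => Real.log (F x) / Real.log x) '' Ioo (0:ℝ) 1) ∧
    sSup ((fun x => Real.log (F x) / Real.log x) '' Ioo (0:ℝ) 1) =
      sSup ((fun x => Real.log (F0 x) / Real.log x) '' Ioo (0:ℝ) 1) ∧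
    sSup ((fun x => Real.log (F0 x) / Real.log x) '' Ioo (0:ℝ) 1) ≤
      sInf ((fun x => Real.log (F0 x) / Real.log x) '' Ioi (1:ℝ)) ∧
    sInf ((fun x => Real.log (F0 x) / Real.log x) '' Ioi (1:ℝ)) =
      sInf ((fun x => Real.log (F x) / Real.log x) '' Ioi (1:ℝ)) ∧
    sInf ((fun x => Real.log (F x) / Real.log x) '' Ioi (1:ℝ)) ≤ 1 := by
  have hK0 : (0:ℝ) < K := by linarith
  have hK1 : (1:ℝ) < K := by linarith
  have hlogK : 0 < Real.log K := Real.log_pos hK1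
  -- positivity of F, F0, P
  have hlbpos : ∀ x : ℝ, 0 < x → 0 < 1 / (K * max 1 x⁻¹) := fun x hx =>
    div_pos one_pos (mul_pos hK0 (lt_of_lt_of_le one_pos (le_max_left _ _)))
  have hFpos : ∀ x, 0 < x → 0 < F x := fun x hx => lt_of_lt_of_le (hlbpos x hx) (hFlb x hx)
  have hF0pos : ∀ x, 0 < x → 0 < F0 x := fun x hx => lt_of_lt_of_le (hlbpos x hx) (hF0lb x hx)
  have hPpos : ∀ y δ, 0 < y → 0 < δ → 0 < P y δ := fun y δ hy hδ =>
    lt_of_lt_of_le (hlbpos y hy) (hPlb y δ hy hδ)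
  -- convenient bounds on (0,1]
  have hFub1 : ∀ x, 0 < x → x ≤ 1 → F x ≤ K := by
    intro x hx hx1
    have := hFub x hx
    rwa [max_eq_left hx1, mul_one] at this
  have hFlb1 : ∀ x, 0 < x → x ≤ 1 → x / K ≤ F x := by
    intro x hx hx1
    have h1 : (1:ℝ) ≤ x⁻¹ := by
      have := one_div_le_one_div_of_le hx hx1
      simpa [one_div] using this
    have := hFlb x hx
    rw [max_eq_right h1] at this
    calc x / K = 1 / (K * x⁻¹) := by field_simp
      _ ≤ F x := this
  have hFlb2 : ∀ x, 1 ≤ x → 1 / K ≤ F x := by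
    intro x hx
    have hx0 : (0:ℝ) < x := lt_of_lt_of_le one_pos hx
    have h1 : x⁻¹ ≤ 1 := by
      rw [inv_le_one_iff₀]; right; exact hx
    have := hFlb x hx0
    rwa [max_eq_left h1, mul_one] at this
  -- power submultiplicativity
  have hFpow : ∀ x : ℝ, 0 < x → ∀ n : ℕ, 1 ≤ n → F (x ^ n) ≤ F x ^ n := by
    intro x hx n hn
    induction n with
    | zero => omega
    | succ n ih =>
      rcases Nat.eq_or_lt_of_le hn with h1 | h1
      · simp [← h1]
      · have hn' : 1 ≤ n := by omega
        have hxn : (0:ℝ) < x ^ n := pow_pos hx n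
        calc F (x ^ (n+1)) = F (x ^ n * x) := by rw [pow_succ]
          _ ≤ F (x ^ n) * F x := hFmul _ _ hxn hx
          _ ≤ F x ^ n * F x := mul_le_mul_of_nonneg_right (ih hn') (hFpos x hx).le
          _ = F x ^ (n+1) := (pow_succ _ _).symm
  set h : ℝ → ℝ := fun x => Real.log (F x) / Real.log x with hdef
  set h0 : ℝ → ℝ := fun x => Real.log (F0 x) / Real.log x with h0def
  -- upper bound for h on (0,1)
  have hub : ∀ x ∈ Ioo (0:ℝ) 1, h x ≤ 1 + Real.log K := by
    rintro x ⟨hx0, hx1⟩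
    have hlx : Real.log x < 0 := Real.log_neg hx0 hx1
    set L : ℝ := -Real.log x with hL
    have hL0 : 0 < L := by simp [hL]; linarith
    set n : ℕ := ⌈L⁻¹⌉₊ + 1 with hn
    have hn0 : (0:ℝ) < n := by positivity
    have hnL : 1 ≤ (n : ℝ) * L := by
      have h1 : L⁻¹ ≤ (n : ℝ) := by
        have := Nat.le_ceil L⁻¹
        push_cast [hn]
        push_cast at this
        linarith
      calc (1:ℝ) = L⁻¹ * L := by field_simp
        _ ≤ (n:ℝ) * L := by nlinarith
    have hxn0 : (0:ℝ) < x ^ n := pow_pos hx0 n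
    have hxn1 : x ^ n ≤ 1 := pow_le_one₀ hx0.le hx1.le
    have hchain : x ^ n / K ≤ F x ^ n :=
      (hFlb1 _ hxn0 hxn1).trans (hFpow x hx0 n (by omega))
    have hlog : (n:ℝ) * Real.log x - Real.log K ≤ (n:ℝ) * Real.log (F x) := by
      have h1 : Real.log (x ^ n / K) ≤ Real.log (F x ^ n) :=
        Real.log_le_log (by positivity) hchain
      rw [Real.log_div (by positivity) hK0.ne', Real.log_pow, Real.log_pow] at h1
      exact_mod_cast h1
    simp only [hdef]
    rw [div_le_iff_of_neg hlx]
    have key : Real.log K * ((n:ℝ) * Real.log x + 1) ≤ 0 := by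
      refine mul_nonpos_iff.mpr (Or.inl ⟨hlogK.le, ?_⟩)
      have : (n:ℝ) * Real.log x = -((n:ℝ) * L) := by rw [hL]; ring
      rw [this]; linarith
    have h2 : (n:ℝ) * ((1 + Real.log K) * Real.log x) ≤ (n:ℝ) * Real.log (F x) := by
      nlinarith [key, hlog]
    exact le_of_mul_le_mul_left h2 hn0
  -- lower bound for h on (1,∞)
  have hlb3 : ∀ y ∈ Ioi (1:ℝ), -Real.log K ≤ h y := by
    rintro y hy
    have hy1 : (1:ℝ) < y := hy
    have hy0 : (0:ℝ) < y := lt_trans one_pos hy1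
    have hly : 0 < Real.log y := Real.log_pos hy1
    set n : ℕ := ⌈(Real.log y)⁻¹⌉₊ + 1 with hn
    have hn0 : (0:ℝ) < n := by positivity
    have hnL : 1 ≤ (n : ℝ) * Real.log y := by
      have h1 : (Real.log y)⁻¹ ≤ (n : ℝ) := by
        have := Nat.le_ceil (Real.log y)⁻¹
        push_cast [hn]
        push_cast at this
        linarith
      calc (1:ℝ) = (Real.log y)⁻¹ * Real.log y := by field_simp
        _ ≤ (n:ℝ) * Real.log y := by nlinarith
    have hyn1 : (1:ℝ) ≤ y ^ n := one_le_pow₀ hy1.le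
    have hchain : 1 / K ≤ F y ^ n := (hFlb2 _ hyn1).trans (hFpow y hy0 n (by omega))
    have hlog : -Real.log K ≤ (n:ℝ) * Real.log (F y) := by
      have h1 : Real.log (1 / K) ≤ Real.log (F y ^ n) :=
        Real.log_le_log (by positivity) hchain
      rw [Real.log_div one_ne_zero hK0.ne', Real.log_one, Real.log_pow] at h1
      simpa using h1
    simp only [hdef]
    rw [le_div_iff₀ hly]
    have key : 0 ≤ Real.log K * ((n:ℝ) * Real.log y - 1) := by
      refine mul_nonneg hlogK.le (by linarith)
    have h2 : (n:ℝ) * (-Real.log K * Real.log y) ≤ (n:ℝ) * Real.log (F y) := by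
      nlinarith [key, hlog]
    exact le_of_mul_le_mul_left h2 hn0
  -- the four sets
  have hne1 : ((fun x => Real.log (F x) / Real.log x) '' Ioo (0:ℝ) 1).Nonempty :=
    ⟨_, ⟨1/2, by norm_num, rfl⟩⟩
  have hne2 : ((fun x => Real.log (F0 x) / Real.log x) '' Ioo (0:ℝ) 1).Nonempty :=
    ⟨_, ⟨1/2, by norm_num, rfl⟩⟩
  have hne3 : ((fun x => Real.log (F0 x) / Real.log x) '' Ioi (1:ℝ)).Nonempty :=
    ⟨_, ⟨2, by norm_num, rfl⟩⟩
  have hne4 : ((fun x => Real.log (F x) / Real.log x) '' Ioi (1:ℝ)).Nonempty :=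
    ⟨_, ⟨2, by norm_num, rfl⟩⟩
  have hbddA : BddAbove ((fun x => Real.log (F x) / Real.log x) '' Ioo (0:ℝ) 1) := by
    refine ⟨1 + Real.log K, ?_⟩
    rintro z ⟨x, hx, rfl⟩
    exact hub x hx
  have hbddB : BddBelow ((fun x => Real.log (F x) / Real.log x) '' Ioi (1:ℝ)) := by
    refine ⟨-Real.log K, ?_⟩
    rintro z ⟨y, hy, rfl⟩
    exact hlb3 y hy
  set A := sSup ((fun x => Real.log (F x) / Real.log x) '' Ioo (0:ℝ) 1) with hA
  set B := sInf ((fun x => Real.log (F x) / Real.log x) '' Ioi (1:ℝ)) with hB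
  have hAmem : ∀ x ∈ Ioo (0:ℝ) 1, h x ≤ A := fun x hx => le_csSup hbddA ⟨x, hx, rfl⟩
  have hBmem : ∀ y ∈ Ioi (1:ℝ), B ≤ h y := fun y hy => csInf_le hbddB ⟨y, hy, rfl⟩
  -- 0 ≤ A
  have hA0 : 0 ≤ A := by
    by_contra hneg
    push_neg at hneg
    set ε := -A / 2 with hε
    have hε0 : 0 < ε := by rw [hε]; linarith
    set x := Real.exp (-(Real.log K / ε + 1)) with hx
    have hx0 : 0 < x := Real.exp_pos _
    have hquot : 0 < Real.log K / ε := div_pos hlogK hε0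
    have hx1 : x < 1 := by
      rw [hx]
      apply Real.exp_lt_one_iff.mpr
      linarith
    have hlx : Real.log x = -(Real.log K / ε + 1) := Real.log_exp _
    have hlxneg : Real.log x < 0 := by rw [hlx]; linarith
    have hhx : -ε ≤ h x := by
      simp only [hdef]
      rw [le_div_iff_of_neg hlxneg]
      have h1 : Real.log (F x) ≤ Real.log K :=
        Real.log_le_log (hFpos x hx0) (hFub1 x hx0 hx1.le)
      have h2 : -ε * Real.log x = Real.log K + ε := by rw [hlx]; field_simp
      linarith
    have hcon := hhx.trans (hAmem x ⟨hx0, hx1⟩)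
    rw [hε] at hcon
    linarith
  -- pointwise comparisons
  have hF0leF : ∀ x, 0 < x → F0 x ≤ F x := fun x hx => (hF0leP x D hx hD).trans (hPleF x D hx)
  have hpoint1 : ∀ x ∈ Ioo (0:ℝ) 1, h x ≤ h0 x := by
    rintro x ⟨hx0, hx1⟩
    have hlx : Real.log x < 0 := Real.log_neg hx0 hx1
    exact div_le_div_neg hlx (Real.log_le_log (hF0pos x hx0) (hF0leF x hx0))
  have hpoint2 : ∀ y ∈ Ioi (1:ℝ), h0 y ≤ h y := by
    rintro y hy
    have hy0 : (0:ℝ) < y := lt_trans one_pos hy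
    have hly : 0 < Real.log y := Real.log_pos hy
    exact (div_le_div_iff_of_pos_right hly).mpr (Real.log_le_log (hF0pos y hy0) (hF0leF y hy0))
  -- hard direction (alpha)
  have hhard1 : ∀ y ∈ Ioo (0:ℝ) 1, h0 y ≤ A := by
    rintro y ⟨hy0, hy1⟩
    have hly : Real.log y < 0 := Real.log_neg hy0 hy1
    have stepA : ∀ δ, 0 < δ → δ ≤ D → Real.log (P y δ) / Real.log y ≤ A := by
      intro δ hδ0 hδD
      set x := δ / D with hxdef
      have hx0 : 0 < x := div_pos hδ0 hD
      have hx1 : x ≤ 1 := (div_le_one hD).mpr hδD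
      have hxD : x * D = δ := by rw [hxdef]; field_simp
      have hlx : Real.log x ≤ 0 := Real.log_nonpos hx0.le hx1
      have hkey : ∀ n : ℕ, 1 ≤ n →
          (n:ℝ) * (A * Real.log y - Real.log (P y δ)) ≤
            Real.log (F x) - A * Real.log x := by
        intro n hn
        have hn1 : (1:ℝ) ≤ (n:ℝ) := by exact_mod_cast hn
        have hyn0 : (0:ℝ) < y ^ n := pow_pos hy0 n
        have hxyn0 : 0 < x * y ^ n := mul_pos hx0 hyn0
        have hxyn1 : x * y ^ n < 1 := by
          have h1 : y ^ n ≤ y ^ 1 := pow_le_pow_of_le_one hy0.le hy1.le hn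
          rw [pow_one] at h1
          nlinarith
        have hmem : x * y ^ n ∈ Ioo (0:ℝ) 1 := ⟨hxyn0, hxyn1⟩
        have hT := hTa x y n hx0 hx1 hy0 hy1.le
        rw [hxD] at hT
        have hPp : 0 < P y δ := hPpos y δ hy0 hδ0
        have hlogT : Real.log (F (x * y ^ n)) ≤
            Real.log (F x) + (n:ℝ) * Real.log (P y δ) := by
          calc Real.log (F (x * y ^ n)) ≤ Real.log (F x * P y δ ^ n) :=
                Real.log_le_log (hFpos _ hxyn0) hT
            _ = Real.log (F x) + (n:ℝ) * Real.log (P y δ) := by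
                rw [Real.log_mul (hFpos x hx0).ne' (by positivity), Real.log_pow]
        have hlogden : Real.log (x * y ^ n) = Real.log x + (n:ℝ) * Real.log y := by
          rw [Real.log_mul hx0.ne' hyn0.ne', Real.log_pow]
        have hdenneg : Real.log x + (n:ℝ) * Real.log y < 0 := by nlinarith
        have hAh : (Real.log (F x) + (n:ℝ) * Real.log (P y δ)) /
            (Real.log x + (n:ℝ) * Real.log y) ≤ A := by
          refine le_trans ?_ (hAmem _ hmem)
          simp only [hdef]
          rw [hlogden]
          exact div_le_div_neg hdenneg hlogT
        rw [div_le_iff_of_neg hdenneg] at hAh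
        ring_nf at hAh ⊢
        linarith
      have harch := arch hkey
      rw [div_le_iff_of_neg hly]
      linarith
    refine le_of_forall_pos_le_add ?_
    intro ε hε
    have hc1 : 1 < Real.exp (ε * -Real.log y) := Real.one_lt_exp_iff.mpr (by nlinarith)
    obtain ⟨δ, hδ0, hδD, hPa⟩ := hPapprox y _ hy0 hc1
    have hlogP : Real.log (P y δ) ≤ Real.log (F0 y) + ε * -Real.log y := by
      calc Real.log (P y δ) ≤ Real.log (F0 y * Real.exp (ε * -Real.log y)) :=
            Real.log_le_log (hPpos y δ hy0 hδ0) hPa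
        _ = Real.log (F0 y) + ε * -Real.log y := by
            rw [Real.log_mul (hF0pos y hy0).ne' (Real.exp_pos _).ne', Real.log_exp]
    have hstep := stepA δ hδ0 hδD
    simp only [h0def]
    have h2 : ε * Real.log y / Real.log y = ε := by
      rw [mul_div_assoc, div_self (ne_of_lt hly), mul_one]
    have h1 : (Real.log (P y δ) + ε * Real.log y) / Real.log y ≤ A + ε := by
      rw [add_div, h2]
      linarith
    refine le_trans ?_ h1
    refine div_le_div_neg hly ?_
    linarith
  -- A = A0
  have hbddA0 : BddAbove ((fun x => Real.log (F0 x) / Real.log x) '' Ioo (0:ℝ) 1) := by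
    refine ⟨A, ?_⟩
    rintro z ⟨x, hx, rfl⟩
    exact hhard1 x hx
  have hAA0 : A = sSup ((fun x => Real.log (F0 x) / Real.log x) '' Ioo (0:ℝ) 1) := by
    apply le_antisymm
    · refine csSup_le hne1 ?_
      rintro z ⟨x, hx, rfl⟩
      exact (hpoint1 x hx).trans (le_csSup hbddA0 ⟨x, hx, rfl⟩)
    · refine csSup_le hne2 ?_
      rintro z ⟨x, hx, rfl⟩
      exact hhard1 x hx
  -- hard direction (beta)
  have hhard2 : ∀ y ∈ Ioi (1:ℝ), B ≤ h0 y := by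
    rintro y hy
    have hy1 : (1:ℝ) < y := hy
    have hy0 : (0:ℝ) < y := lt_trans one_pos hy1
    have hly : 0 < Real.log y := Real.log_pos hy1
    have stepA : ∀ δ, 0 < δ → δ ≤ D → B ≤ Real.log (P y δ) / Real.log y := by
      intro δ hδ0 hδD
      obtain ⟨u, hu1, hδ'δ⟩ : ∃ u : ℝ, 1 ≤ u ∧ D / (u * y) ≤ δ := by
        refine ⟨max 1 (D / (δ * y)), le_max_left _ _, ?_⟩
        have hu0' : (0:ℝ) < max 1 (D / (δ * y)) := lt_of_lt_of_le one_pos (le_max_left _ _)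
        have h1 : D / (δ * y) ≤ max 1 (D / (δ * y)) := le_max_right _ _
        have h2 : D / (δ * y) * (δ * y) = D := div_mul_cancel₀ _ (mul_pos hδ0 hy0).ne'
        have h3 : D ≤ max 1 (D / (δ * y)) * (δ * y) := by
          calc D = D / (δ * y) * (δ * y) := h2.symm
            _ ≤ max 1 (D / (δ * y)) * (δ * y) :=
                mul_le_mul_of_nonneg_right h1 (mul_pos hδ0 hy0).le
        rw [div_le_iff₀ (mul_pos hu0' hy0)]
        calc D ≤ max 1 (D / (δ * y)) * (δ * y) := h3
          _ = δ * (max 1 (D / (δ * y)) * y) := by ring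
      have hu0 : (0:ℝ) < u := lt_of_lt_of_le one_pos hu1
      have hlu : 0 ≤ Real.log u := Real.log_nonneg hu1
      set δ' := D / (u * y) with hδ'def
      have hδ'0 : 0 < δ' := div_pos hD (mul_pos hu0 hy0)
      have hP'p : 0 < P y δ' := hPpos y δ' hy0 hδ'0
      have hkey : ∀ n : ℕ, 1 ≤ n →
          (n:ℝ) * (B * Real.log y - Real.log (P y δ')) ≤
            Real.log (F u) - B * Real.log u := by
        intro n hn
        have hn1 : (1:ℝ) ≤ (n:ℝ) := by exact_mod_cast hn
        have hyn0 : (0:ℝ) < y ^ n := pow_pos hy0 n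
        have hyn1 : (1:ℝ) < y ^ n := by
          have h1 : y ^ 1 ≤ y ^ n := pow_le_pow_right₀ hy1.le hn
          rw [pow_one] at h1
          linarith
        have huyn0 : (0:ℝ) < u * y ^ n := mul_pos hu0 hyn0
        have hmem : u * y ^ n ∈ Ioi (1:ℝ) := by
          simp only [mem_Ioi]
          nlinarith
        have hT := hTb u y n hu1 hy1.le
        rw [← hδ'def] at hT
        have hlogT : Real.log (F (u * y ^ n)) ≤
            Real.log (F u) + (n:ℝ) * Real.log (P y δ') := by
          calc Real.log (F (u * y ^ n)) ≤ Real.log (F u * P y δ' ^ n) :=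
                Real.log_le_log (hFpos _ huyn0) hT
            _ = Real.log (F u) + (n:ℝ) * Real.log (P y δ') := by
                rw [Real.log_mul (hFpos u hu0).ne' (by positivity), Real.log_pow]
        have hlogden : Real.log (u * y ^ n) = Real.log u + (n:ℝ) * Real.log y := by
          rw [Real.log_mul hu0.ne' hyn0.ne', Real.log_pow]
        have hdenpos : 0 < Real.log u + (n:ℝ) * Real.log y := by nlinarith
        have hBh : B ≤ (Real.log (F u) + (n:ℝ) * Real.log (P y δ')) /
            (Real.log u + (n:ℝ) * Real.log y) := by
          refine (hBmem _ hmem).trans ?_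
          simp only [hdef]
          rw [hlogden]
          exact (div_le_div_iff_of_pos_right hdenpos).mpr hlogT
        rw [le_div_iff₀ hdenpos] at hBh
        ring_nf at hBh ⊢
        linarith
      have harch := arch hkey
      have hP'P : Real.log (P y δ') ≤ Real.log (P y δ) :=
        Real.log_le_log hP'p (hPmono y δ' δ hy0 hδ'δ)
      rw [le_div_iff₀ hly]
      linarith
    refine le_of_forall_pos_le_add ?_
    intro ε hε
    have hc1 : 1 < Real.exp (ε * Real.log y) := Real.one_lt_exp_iff.mpr (by nlinarith)
    obtain ⟨δ, hδ0, hδD, hPa⟩ := hPapprox y _ hy0 hc1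
    have hlogP : Real.log (P y δ) ≤ Real.log (F0 y) + ε * Real.log y := by
      calc Real.log (P y δ) ≤ Real.log (F0 y * Real.exp (ε * Real.log y)) :=
            Real.log_le_log (hPpos y δ hy0 hδ0) hPa
        _ = Real.log (F0 y) + ε * Real.log y := by
            rw [Real.log_mul (hF0pos y hy0).ne' (Real.exp_pos _).ne', Real.log_exp]
    have hstep := stepA δ hδ0 hδD
    simp only [h0def]
    have h1 : Real.log (P y δ) / Real.log y ≤
        (Real.log (F0 y) + ε * Real.log y) / Real.log y :=
      (div_le_div_iff_of_pos_right hly).mpr hlogP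
    have h2 : (Real.log (F0 y) + ε * Real.log y) / Real.log y =
        Real.log (F0 y) / Real.log y + ε := by
      rw [add_div, mul_div_assoc, div_self (ne_of_gt hly), mul_one]
    linarith [hstep, h1, h2 ▸ h1]
  -- B0 = B
  have hbddB0 : BddBelow ((fun x => Real.log (F0 x) / Real.log x) '' Ioi (1:ℝ)) := by
    refine ⟨B, ?_⟩
    rintro z ⟨y, hy, rfl⟩
    exact hhard2 y hy
  have hBB0 : sInf ((fun x => Real.log (F0 x) / Real.log x) '' Ioi (1:ℝ)) = B := by
    apply le_antisymm
    · refine le_csInf hne4 ?_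
      rintro z ⟨y, hy, rfl⟩
      exact (csInf_le hbddB0 ⟨y, hy, rfl⟩).trans (hpoint2 y hy)
    · refine le_csInf hne3 ?_
      rintro z ⟨y, hy, rfl⟩
      exact hhard2 y hy
  -- A ≤ B
  have hxyle : ∀ x ∈ Ioo (0:ℝ) 1, ∀ y ∈ Ioi (1:ℝ), h x ≤ h y := by
    rintro x ⟨hx0, hx1⟩ y hy
    have hy1 : (1:ℝ) < y := hy
    have hy0 : (0:ℝ) < y := lt_trans one_pos hy1
    have hlx : Real.log x < 0 := Real.log_neg hx0 hx1
    have hly : 0 < Real.log y := Real.log_pos hy1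
    set r := Real.log y / (-Real.log x) with hrdef
    have hr0 : 0 < r := div_pos hly (by linarith)
    have hrlx : r * (-Real.log x) = Real.log y :=
      div_mul_cancel₀ _ (by linarith : -Real.log x ≠ 0)
    have hkey : ∀ n : ℕ, 1 ≤ n →
        (n:ℝ) * (-(r * Real.log (F x) + Real.log (F y))) ≤
          |Real.log (F x)| - Real.log (x / K) := by
      intro n hn
      have hn1 : (1:ℝ) ≤ (n:ℝ) := by exact_mod_cast hn
      have hnr0 : 0 < (n:ℝ) * r := mul_pos (by linarith) hr0
      set m := ⌈(n:ℝ) * r⌉₊ with hmdef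
      have hm1 : 1 ≤ m := by
        have := Nat.ceil_pos.mpr hnr0
        omega
      have hmlb : (n:ℝ) * r ≤ (m:ℝ) := Nat.le_ceil _
      have hmub : (m:ℝ) ≤ (n:ℝ) * r + 1 := le_of_lt (Nat.ceil_lt_add_one (le_of_lt hnr0))
      set z := x ^ m * y ^ n with hzdef
      have hxm0 : (0:ℝ) < x ^ m := pow_pos hx0 m
      have hyn0 : (0:ℝ) < y ^ n := pow_pos hy0 n
      have hz0 : 0 < z := mul_pos hxm0 hyn0
      have hlz : Real.log z = (m:ℝ) * Real.log x + (n:ℝ) * Real.log y := by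
        rw [hzdef, Real.log_mul hxm0.ne' hyn0.ne', Real.log_pow, Real.log_pow]
      have hnry : (n:ℝ) * (r * (-Real.log x)) = (n:ℝ) * Real.log y := by rw [hrlx]
      have hz1 : z ≤ 1 := by
        have h1 : Real.log z ≤ 0 := by
          rw [hlz]
          nlinarith [mul_le_mul_of_nonneg_right hmlb (by linarith : (0:ℝ) ≤ -Real.log x)]
        by_contra hz1'
        push_neg at hz1'
        have := Real.log_pos hz1'
        linarith
      have hzx : x ≤ z := by
        have h1 : Real.log x ≤ Real.log z := by
          rw [hlz]
          nlinarith [mul_le_mul_of_nonneg_right hmub (by linarith : (0:ℝ) ≤ -Real.log x)]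
        by_contra hzx'
        push_neg at hzx'
        have := Real.log_lt_log hz0 hzx'
        linarith
      have hFz : x / K ≤ F z := by
        have h1 := hFlb1 z hz0 hz1
        have h2 : x / K ≤ z / K := (div_le_div_iff_of_pos_right hK0).mpr hzx
        linarith
      have hFzub : F z ≤ F x ^ m * F y ^ n := by
        calc F z = F (x ^ m * y ^ n) := by rw [hzdef]
          _ ≤ F (x ^ m) * F (y ^ n) := hFmul _ _ hxm0 hyn0
          _ ≤ F x ^ m * F y ^ n := by
              refine mul_le_mul (hFpow x hx0 m hm1) (hFpow y hy0 n hn)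
                (hFpos _ hyn0).le (pow_nonneg (hFpos x hx0).le m)
      have hlogchain : Real.log (x / K) ≤
          (m:ℝ) * Real.log (F x) + (n:ℝ) * Real.log (F y) := by
        calc Real.log (x / K) ≤ Real.log (F z) := Real.log_le_log (div_pos hx0 hK0) hFz
          _ ≤ Real.log (F x ^ m * F y ^ n) := Real.log_le_log (hFpos z hz0) hFzub
          _ = (m:ℝ) * Real.log (F x) + (n:ℝ) * Real.log (F y) := by
              rw [Real.log_mul (pow_pos (hFpos x hx0) m).ne' (pow_pos (hFpos y hy0) n).ne',
                Real.log_pow, Real.log_pow]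
      have hmF : (m:ℝ) * Real.log (F x) ≤
          (n:ℝ) * r * Real.log (F x) + |Real.log (F x)| := by
        rcases le_or_gt 0 (Real.log (F x)) with hsgn | hsgn
        · have h1 : (m:ℝ) * Real.log (F x) ≤ ((n:ℝ) * r + 1) * Real.log (F x) :=
            mul_le_mul_of_nonneg_right hmub hsgn
          rw [abs_of_nonneg hsgn]
          nlinarith
        · have h1 : (m:ℝ) * Real.log (F x) ≤ (n:ℝ) * r * Real.log (F x) := by
            nlinarith [hmlb]
          have habs : 0 ≤ |Real.log (F x)| := abs_nonneg _
          linarith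
      nlinarith [hlogchain, hmF]
    have harch := arch hkey
    have hineq : Real.log (F y) * Real.log x ≤ Real.log (F x) * Real.log y := by
      have h1 : 0 ≤ (r * Real.log (F x) + Real.log (F y)) * (-Real.log x) :=
        mul_nonneg (by linarith) (by linarith)
      have h2 : r * Real.log (F x) * (-Real.log x) = Real.log (F x) * Real.log y := by
        rw [mul_comm r (Real.log (F x)), mul_assoc, hrlx]
      nlinarith [h1, h2]
    simp only [hdef]
    rw [div_le_iff_of_neg hlx, div_mul_eq_mul_div, div_le_iff₀ hly]
    exact hineq
  have hAB : A ≤ B := by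
    refine le_csInf hne4 ?_
    rintro z ⟨y, hy, rfl⟩
    refine csSup_le hne1 ?_
    rintro z' ⟨x, hx, rfl⟩
    exact hxyle x hx y hy
  -- B ≤ 1
  have hB1 : B ≤ 1 := by
    refine le_of_forall_pos_le_add ?_
    intro ε hε
    set y := Real.exp (Real.log K / ε + 1) with hydef
    have hly : Real.log y = Real.log K / ε + 1 := Real.log_exp _
    have hquot : 0 < Real.log K / ε := div_pos hlogK hε
    have hy1 : (1:ℝ) < y := Real.one_lt_exp_iff.mpr (by linarith)
    have hy0 : (0:ℝ) < y := lt_trans one_pos hy1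
    have hlypos : 0 < Real.log y := Real.log_pos hy1
    have hFy : F y ≤ K * y := by
      have := hFub y hy0
      rwa [max_eq_right hy1.le] at this
    have hhy : h y ≤ 1 + ε := by
      simp only [hdef]
      rw [div_le_iff₀ hlypos]
      have h1 : Real.log (F y) ≤ Real.log K + Real.log y := by
        calc Real.log (F y) ≤ Real.log (K * y) := Real.log_le_log (hFpos y hy0) hFy
          _ = Real.log K + Real.log y := Real.log_mul hK0.ne' hy0.ne'
      have h2 : ε * Real.log y = Real.log K + ε := by
        rw [hly]
        field_simp
      nlinarith [h1, h2]
    exact (hBmem y hy1).trans hhy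
  exact ⟨hA0, hAA0, by rw [← hAA0, hBB0]; exact hAB, hBB0, hB1⟩

end SIOReal


set_option maxHeartbeats 1000000 in
/-- If `w ∈ A_X(Γ,t)`, then `Q_t w` and `Q_t⁰ w` are regular, and
`0 ≤ α(Q_t w) = α(Q_t⁰ w) ≤ β(Q_t⁰ w) = β(Q_t w) ≤ 1`. -/
theorem stmt9 (Γ : Set ℂ) (hΓc : IsCompact Γ) (hΓconn : IsConnected Γ)
    (μ : Measure ℂ) (hμ : μ = (μH[1] : Measure ℂ).restrict Γ)
    (hμ0 : 0 < μ Γ) (hμfin : μ Γ < ⊤) (t : ℂ) (ht : t ∈ Γ)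
    (ρ : (ℂ → ℝ≥0∞) → ℝ≥0∞) (hρ : IsBFN μ ρ)
    (w : ℂ → ℝ≥0∞) (hw : IsWeight μ w)
    (hwA : MemAt ρ (assoc μ ρ) Γ w t) :
    RegularFn (Qt μ ρ (assoc μ ρ) Γ w t) ∧
    RegularFn (Qt0 μ ρ (assoc μ ρ) Γ w t) ∧
    0 ≤ alphaInd (Qt μ ρ (assoc μ ρ) Γ w t) ∧
    alphaInd (Qt μ ρ (assoc μ ρ) Γ w t) = alphaInd (Qt0 μ ρ (assoc μ ρ) Γ w t) ∧
    alphaInd (Qt0 μ ρ (assoc μ ρ) Γ w t) ≤ betaInd (Qt0 μ ρ (assoc μ ρ) Γ w t) ∧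
    betaInd (Qt0 μ ρ (assoc μ ρ) Γ w t) = betaInd (Qt μ ρ (assoc μ ρ) Γ w t) ∧
    betaInd (Qt μ ρ (assoc μ ρ) Γ w t) ≤ 1 := by
  have hs : SIOAux3.Setup Γ μ t ρ w := ⟨hΓc, hΓconn, hμ, hμ0, hμfin, ht, hρ, hw, hwA⟩
  have hD : 0 < dMax Γ t := hs.hD
  have hSfin : SIOAux3.SB μ ρ Γ w t ≠ ⊤ := hs.SB_ne_top
  have hs1 : 1 ≤ (SIOAux3.SB μ ρ Γ w t).toReal := hs.s_ge_one
  have hK : (2:ℝ) ≤ 2 * (SIOAux3.SB μ ρ Γ w t).toReal := by linarith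
  -- regularity of Qt
  have hreg1 : RegularFn (Qt μ ρ (assoc μ ρ) Γ w t) := by
    refine ⟨1/2, by norm_num, ENNReal.ofReal 3 * SIOAux3.SB μ ρ Γ w t,
      ENNReal.mul_lt_top ENNReal.ofReal_lt_top hs.SB_lt_top, ?_⟩
    intro x hx
    obtain ⟨hx1, hx2⟩ := abs_lt.mp hx
    have hx0 : 0 < x := by linarith
    refine (hs.Qt_ub hx0).trans ?_
    refine mul_le_mul_left (ENNReal.ofReal_le_ofReal ?_) _
    have hm : max 1 x ≤ 3/2 := max_le (by norm_num) (by linarith)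
    linarith
  -- regularity of Qt0
  have hreg2 : RegularFn (Qt0 μ ρ (assoc μ ρ) Γ w t) := by
    refine ⟨1/2, by norm_num, ENNReal.ofReal 3 * SIOAux3.SB μ ρ Γ w t,
      ENNReal.mul_lt_top ENNReal.ofReal_lt_top hs.SB_lt_top, ?_⟩
    intro x hx
    obtain ⟨hx1, hx2⟩ := abs_lt.mp hx
    have hx0 : 0 < x := by linarith
    refine ((hs.Qt0_le_Psi hx0 hD).trans (hs.Psi_ub hx0)).trans ?_
    refine mul_le_mul_left (ENNReal.ofReal_le_ofReal ?_) _
    have hm : max 1 x ≤ 3/2 := max_le (by norm_num) (by linarith)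
    linarith
  -- transfer to real-valued functions
  have hmaxpos : ∀ x : ℝ, (0:ℝ) ≤ 2 * max 1 x := fun x =>
    mul_nonneg (by norm_num) (le_trans zero_le_one (le_max_left _ _))
  have hFub : ∀ x, 0 < x → (Qt μ ρ (assoc μ ρ) Γ w t x).toReal ≤
      2 * (SIOAux3.SB μ ρ Γ w t).toReal * max 1 x := by
    intro x hx
    have h := SIOAux3.toReal_le_of_le hSfin (hmaxpos x) (hs.Qt_ub hx)
    calc (Qt μ ρ (assoc μ ρ) Γ w t x).toReal
        ≤ 2 * max 1 x * (SIOAux3.SB μ ρ Γ w t).toReal := h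
      _ = 2 * (SIOAux3.SB μ ρ Γ w t).toReal * max 1 x := by ring
  have hFlb : ∀ x, 0 < x → 1 / (2 * (SIOAux3.SB μ ρ Γ w t).toReal * max 1 x⁻¹) ≤
      (Qt μ ρ (assoc μ ρ) Γ w t x).toReal := by
    intro x hx
    have h := SIOAux3.le_toReal_of_inv (hs.Qt_ne_top hx) (hmaxpos x⁻¹) (hs.Qt_lb hx)
    calc 1 / (2 * (SIOAux3.SB μ ρ Γ w t).toReal * max 1 x⁻¹)
        = 1 / (2 * max 1 x⁻¹ * (SIOAux3.SB μ ρ Γ w t).toReal) := by ring_nf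
      _ ≤ (Qt μ ρ (assoc μ ρ) Γ w t x).toReal := h
  have hF0lb : ∀ x, 0 < x → 1 / (2 * (SIOAux3.SB μ ρ Γ w t).toReal * max 1 x⁻¹) ≤
      (Qt0 μ ρ (assoc μ ρ) Γ w t x).toReal := by
    intro x hx
    have h := SIOAux3.le_toReal_of_inv (hs.Qt0_ne_top hx) (hmaxpos x⁻¹) (hs.Qt0_lb hx)
    calc 1 / (2 * (SIOAux3.SB μ ρ Γ w t).toReal * max 1 x⁻¹)
        = 1 / (2 * max 1 x⁻¹ * (SIOAux3.SB μ ρ Γ w t).toReal) := by ring_nf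
      _ ≤ (Qt0 μ ρ (assoc μ ρ) Γ w t x).toReal := h
  have hPlb : ∀ y δ : ℝ, 0 < y → 0 < δ →
      1 / (2 * (SIOAux3.SB μ ρ Γ w t).toReal * max 1 y⁻¹) ≤
      (SIOAux3.Psi μ ρ Γ w t y δ).toReal := by
    intro y δ hy hδ
    have h := SIOAux3.le_toReal_of_inv (hs.Psi_ne_top hy) (hmaxpos y⁻¹) (hs.Psi_lb hy hδ)
    calc 1 / (2 * (SIOAux3.SB μ ρ Γ w t).toReal * max 1 y⁻¹)
        = 1 / (2 * max 1 y⁻¹ * (SIOAux3.SB μ ρ Γ w t).toReal) := by ring_nf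
      _ ≤ (SIOAux3.Psi μ ρ Γ w t y δ).toReal := h
  have hPleF : ∀ y δ : ℝ, 0 < y → (SIOAux3.Psi μ ρ Γ w t y δ).toReal ≤
      (Qt μ ρ (assoc μ ρ) Γ w t y).toReal := by
    intro y δ hy
    refine ENNReal.toReal_mono (hs.Qt_ne_top hy) ?_
    rw [hs.Qt_eq_Psi hy]
    exact SIOAux3.Psi_le_PsiD
  have hF0leP : ∀ y δ : ℝ, 0 < y → 0 < δ →
      (Qt0 μ ρ (assoc μ ρ) Γ w t y).toReal ≤ (SIOAux3.Psi μ ρ Γ w t y δ).toReal := by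
    intro y δ hy hδ
    exact ENNReal.toReal_mono (hs.Psi_ne_top hy) (hs.Qt0_le_Psi hy hδ)
  have hPmono : ∀ y δ δ' : ℝ, 0 < y → δ ≤ δ' →
      (SIOAux3.Psi μ ρ Γ w t y δ).toReal ≤ (SIOAux3.Psi μ ρ Γ w t y δ').toReal := by
    intro y δ δ' hy h
    exact ENNReal.toReal_mono (hs.Psi_ne_top hy) (SIOAux3.Psi_mono h)
  have hPapprox : ∀ y c : ℝ, 0 < y → 1 < c → ∃ δ : ℝ, 0 < δ ∧ δ ≤ dMax Γ t ∧
      (SIOAux3.Psi μ ρ Γ w t y δ).toReal ≤ (Qt0 μ ρ (assoc μ ρ) Γ w t y).toReal * c := by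
    intro y c hy hc
    have hofc : (1:ℝ≥0∞) < ENNReal.ofReal c := by
      rw [← ENNReal.ofReal_one]
      exact (ENNReal.ofReal_lt_ofReal_iff (by linarith)).mpr hc
    have hlt : Qt0 μ ρ (assoc μ ρ) Γ w t y <
        Qt0 μ ρ (assoc μ ρ) Γ w t y * ENNReal.ofReal c := by
      conv_lhs => rw [← mul_one (Qt0 μ ρ (assoc μ ρ) Γ w t y)]
      exact ENNReal.mul_lt_mul_right (hs.Qt0_pos hy).ne' (hs.Qt0_ne_top hy) hofc
    obtain ⟨δ, hδ0, hδD, hlt'⟩ := hs.Psi_approx hy hlt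
    refine ⟨δ, hδ0, hδD, ?_⟩
    have h2 := ENNReal.toReal_mono
      (ENNReal.mul_ne_top (hs.Qt0_ne_top hy) ENNReal.ofReal_ne_top) hlt'.le
    rwa [ENNReal.toReal_mul, ENNReal.toReal_ofReal (by linarith : (0:ℝ) ≤ c)] at h2
  have hFmul : ∀ x y : ℝ, 0 < x → 0 < y →
      (Qt μ ρ (assoc μ ρ) Γ w t (x * y)).toReal ≤
      (Qt μ ρ (assoc μ ρ) Γ w t x).toReal * (Qt μ ρ (assoc μ ρ) Γ w t y).toReal := by
    intro x y hx hy
    have h2 := ENNReal.toReal_mono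
      (ENNReal.mul_ne_top (hs.Qt_ne_top hx) (hs.Qt_ne_top hy)) (hs.Qt_submult hx hy)
    rwa [ENNReal.toReal_mul] at h2
  have hTa : ∀ x y : ℝ, ∀ n : ℕ, 0 < x → x ≤ 1 → 0 < y → y ≤ 1 →
      (Qt μ ρ (assoc μ ρ) Γ w t (x * y ^ n)).toReal ≤
      (Qt μ ρ (assoc μ ρ) Γ w t x).toReal *
        ((SIOAux3.Psi μ ρ Γ w t y (x * dMax Γ t)).toReal) ^ n := by
    intro x y n hx hx1 hy hy1
    have h2 := ENNReal.toReal_mono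
      (ENNReal.mul_ne_top (hs.Qt_ne_top hx) (ENNReal.pow_ne_top (hs.Psi_ne_top hy)))
      (hs.Talpha hx hx1 hy hy1 n)
    rwa [ENNReal.toReal_mul, ENNReal.toReal_pow] at h2
  have hTb : ∀ u y : ℝ, ∀ n : ℕ, 1 ≤ u → 1 ≤ y →
      (Qt μ ρ (assoc μ ρ) Γ w t (u * y ^ n)).toReal ≤
      (Qt μ ρ (assoc μ ρ) Γ w t u).toReal *
        ((SIOAux3.Psi μ ρ Γ w t y (dMax Γ t / (u * y))).toReal) ^ n := by
    intro u y n hu hy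
    have hu0 : (0:ℝ) < u := lt_of_lt_of_le one_pos hu
    have hy0 : (0:ℝ) < y := lt_of_lt_of_le one_pos hy
    have h2 := ENNReal.toReal_mono
      (ENNReal.mul_ne_top (hs.Qt_ne_top hu0) (ENNReal.pow_ne_top (hs.Psi_ne_top hy0)))
      (hs.Tbeta hu hy n)
    rwa [ENNReal.toReal_mul, ENNReal.toReal_pow] at h2
  obtain ⟨c1, c2, c3, c4, c5⟩ := SIOReal.real_main
    (fun x => (Qt μ ρ (assoc μ ρ) Γ w t x).toReal)
    (fun x => (Qt0 μ ρ (assoc μ ρ) Γ w t x).toReal)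
    (fun y δ => (SIOAux3.Psi μ ρ Γ w t y δ).toReal)
    (2 * (SIOAux3.SB μ ρ Γ w t).toReal) (dMax Γ t)
    hK hD hFub hFlb hF0lb hPlb hPleF hF0leP hPmono hPapprox hFmul hTa hTb
  exact ⟨hreg1, hreg2, c1, c2, c3, c4, c5⟩
end
end
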